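/- arXiv:1305.1202 — 3 statements merged into one kernel-verified Lean document; each statement's English description precedes it below -/
import Mathlib

section
/- Let x_n, y_n ∈ D([0,∞)) and x, y ∈ C([0,∞)) with each y_n increasing, x_n → x locally uniformly, and y_n → y locally uniformly. Then y is increasing and ∫₀ᵗ x_n(s) dy_n(s) → ∫₀ᵗ x(s) dy(s) locally uniformly in t ≥ 0. -/
open Filter Topology Set MeasureTheory

noncomputable section

/-- `f : [0,∞) → ℝ` is càdlàg: right continuous on `[0,∞)` with left limits on `(0,∞)`. -/
def Cadlag (f : ℝ → ℝ) : Prop :=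
  (∀ t : ℝ, 0 ≤ t → Tendsto f (nhdsWithin t (Ioi t)) (nhds (f t))) ∧
  (∀ t : ℝ, 0 < t → ∃ l : ℝ, Tendsto f (nhdsWithin t (Iio t)) (nhds l))

lemma rightCont_aesm (f : ℝ → ℝ)
    (hf : ∀ s : ℝ, 0 ≤ s → Tendsto f (nhdsWithin s (Ioi s)) (nhds (f s)))
    (ν : Measure ℝ) (t : ℝ) :
    AEStronglyMeasurable f (ν.restrict (Ioc 0 t)) := by
  have hmeas : ∀ k : ℕ, Measurable (fun s : ℝ => f (min t (⌈s * 2 ^ k⌉ / 2 ^ k))) := fun k =>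
    (measurable_from_top (f := fun z : ℤ => f (min t ((z : ℝ) / 2 ^ k)))).comp
      (Int.measurable_ceil.comp (measurable_id.mul_const _))
  have hconv : ∀ s ∈ Ioc (0:ℝ) t,
      Tendsto (fun k : ℕ => f (min t ((⌈s * 2 ^ k⌉ : ℝ) / 2 ^ k))) atTop (nhds (f s)) := by
    intro s hs
    have hcw : ContinuousWithinAt f (Ici s) s :=
      continuousWithinAt_Ioi_iff_Ici.mp (hf s hs.1.le)
    have hlow : ∀ k : ℕ, s ≤ min t ((⌈s * 2 ^ k⌉ : ℝ) / 2 ^ k) := by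
      intro k
      refine le_min hs.2 ?_
      rw [le_div_iff₀ (by positivity)]
      exact Int.le_ceil _
    have hup : ∀ k : ℕ, min t ((⌈s * 2 ^ k⌉ : ℝ) / 2 ^ k) ≤ s + (1/2 : ℝ) ^ k := by
      intro k
      refine (min_le_right _ _).trans ?_
      rw [div_le_iff₀ (by positivity)]
      have : (s + (1/2 : ℝ) ^ k) * 2 ^ k = s * 2 ^ k + 1 := by
        rw [add_mul, ← mul_pow]; norm_num
      rw [this]
      exact (Int.ceil_lt_add_one _).le
    have htends : Tendsto (fun k : ℕ => min t ((⌈s * 2 ^ k⌉ : ℝ) / 2 ^ k)) atTop (nhds s) := by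
      have h2 : Tendsto (fun k : ℕ => s + (1/2 : ℝ) ^ k) atTop (nhds s) := by
        have := tendsto_pow_atTop_nhds_zero_of_lt_one (by norm_num : (0:ℝ) ≤ 1/2) (by norm_num)
        simpa using tendsto_const_nhds.add this
      exact tendsto_of_tendsto_of_tendsto_of_le_of_le tendsto_const_nhds h2 hlow hup
    have hu : Tendsto (fun k : ℕ => min t ((⌈s * 2 ^ k⌉ : ℝ) / 2 ^ k)) atTop
        (nhdsWithin s (Ici s)) :=
      tendsto_nhdsWithin_of_tendsto_nhds_of_eventually_within _ htends
        (Eventually.of_forall fun k => hlow k)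
    exact hcw.tendsto.comp hu
  have : AEMeasurable f (ν.restrict (Ioc 0 t)) :=
    aemeasurable_of_tendsto_metrizable_ae atTop (fun k => (hmeas k).aemeasurable)
      (ae_restrict_of_forall_mem measurableSet_Ioc hconv)
  exact this.aestronglyMeasurable

lemma iUnion_Ioc_succ (a : ℕ → ℝ) (ha : Monotone a) (m : ℕ) :
    ⋃ i ∈ Finset.range m, Ioc (a i) (a (i+1)) = Ioc (a 0) (a m) := by
  induction m with
  | zero => simp
  | succ n ih =>
    rw [Finset.range_add_one, Finset.set_biUnion_insert, ih, Set.union_comm]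
    exact Ioc_union_Ioc_eq_Ioc (ha (Nat.zero_le n)) (ha (Nat.le_succ n))

lemma stj_toReal (G : StieltjesFunction ℝ) (a b c : ℝ) (hab : a ≤ b) :
    (G.measure (Ioc a (min b c))).toReal = G (min b c) - G (min a c) := by
  rcases le_total a c with h | h
  · rw [min_eq_left h, G.measure_Ioc,
      ENNReal.toReal_ofReal (sub_nonneg.2 (G.mono (le_min hab h)))]
  · rw [min_eq_right h, min_eq_right (h.trans hab), Set.Ioc_eq_empty (not_lt.2 h),
      measure_empty, ENNReal.toReal_zero, sub_self]

/-- **Lemma 6.3.** Let `x_n, y_n ∈ D([0,∞))` with each `y_n` increasing (realized as Stieltjes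
functions), and let `x, y ∈ C([0,∞))` with `x_n → x` and `y_n → y` locally uniformly. Then `y`
is increasing (on `[0,∞)`) and `∫₀ᵗ x_n(s) dy_n(s) → ∫₀ᵗ x(s) dy(s)` locally uniformly in
`t ≥ 0`, the integrator of the limit being the Stieltjes measure of (an extension of) `y`. -/
theorem stieltjes_integral_tendsto (x : ℕ → ℝ → ℝ) (Y : ℕ → StieltjesFunction ℝ)
    (xlim ylim : ℝ → ℝ)
    (hx : ∀ n, Cadlag (x n))
    (hxlim : ContinuousOn xlim (Ici 0))
    (hylim : ContinuousOn ylim (Ici 0))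
    (hxconv : ∀ T : ℝ, 0 < T → TendstoUniformlyOn (fun n s => x n s) xlim atTop (Icc 0 T))
    (hyconv : ∀ T : ℝ, 0 < T → TendstoUniformlyOn (fun n s => Y n s) ylim atTop (Icc 0 T)) :
    MonotoneOn ylim (Ici 0) ∧
    ∃ Ylim : StieltjesFunction ℝ, (∀ t : ℝ, 0 ≤ t → Ylim t = ylim t) ∧
      ∀ T : ℝ, 0 < T →
        TendstoUniformlyOn
          (fun n t => ∫ s in Ioc (0:ℝ) t, x n s ∂(Y n).measure)
          (fun t => ∫ s in Ioc (0:ℝ) t, xlim s ∂Ylim.measure)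
          atTop (Icc 0 T) := by
  have hmono : MonotoneOn ylim (Ici 0) := by
    intro a ha b hb hab
    have ha' : (0:ℝ) ≤ a := ha
    have hb' : (0:ℝ) ≤ b := hb
    have hT : (0:ℝ) < b + 1 := by linarith
    have h1 := (hyconv (b+1) hT).tendsto_at (x := a) ⟨ha', by linarith⟩
    have h2 := (hyconv (b+1) hT).tendsto_at (x := b) ⟨hb', by linarith⟩
    exact le_of_tendsto_of_tendsto' h1 h2 (fun n => (Y n).mono hab)
  refine ⟨hmono, ?_⟩
  have hylimc : Continuous (fun t : ℝ => ylim (max t 0)) :=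
    hylim.comp_continuous (continuous_id.max continuous_const) (fun s => mem_Ici.2 (le_max_right _ _))
  set Ylim : StieltjesFunction ℝ :=
    { toFun := fun t => ylim (max t 0)
      mono' := fun a b hab => hmono (le_max_right a 0) (le_max_right b 0)
        (max_le_max hab le_rfl)
      right_continuous' := fun t => hylimc.continuousAt.continuousWithinAt } with hYdef
  have hYeq : ∀ t : ℝ, 0 ≤ t → Ylim t = ylim t := by
    intro t ht
    show ylim (max t 0) = ylim t
    rw [max_eq_left ht]
  refine ⟨Ylim, hYeq, ?_⟩
  intro T hT
  rw [Metric.tendstoUniformlyOn_iff]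
  intro ε hε
  -- bound on xlim
  obtain ⟨M0, hM0⟩ := (isCompact_Icc (a := (0:ℝ)) (b := T)).exists_bound_of_continuousOn
    (hxlim.mono (fun s hs => hs.1))
  have hM0' : 0 ≤ M0 := le_trans (norm_nonneg _) (hM0 0 ⟨le_refl 0, hT.le⟩)
  set M : ℝ := M0 + 1 with hMdef
  have hM : 0 < M := by linarith
  set C : ℝ := ylim T - ylim 0 + 1 with hCdef
  have hC : 0 < C := by
    have := hmono (le_refl (0:ℝ)) hT.le hT.le
    simp only [hCdef]; linarith
  -- uniform continuity of xlim on Icc 0 T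
  have hUC : UniformContinuousOn xlim (Icc 0 T) :=
    (isCompact_Icc).uniformContinuousOn_of_continuous (hxlim.mono (fun s hs => hs.1))
  rw [Metric.uniformContinuousOn_iff] at hUC
  obtain ⟨δ, hδ, hδ'⟩ := hUC (ε / (8 * C)) (by positivity)
  -- partition
  obtain ⟨m, hm⟩ := exists_nat_gt (T / δ)
  have hm0 : 0 < (m:ℝ) := lt_of_le_of_lt (by positivity) hm
  have hmesh : T / m < δ := by
    rw [div_lt_iff₀ hm0]
    rw [div_lt_iff₀ hδ] at hm
    linarith [hm]
  set p : ℕ → ℝ := fun i => (i : ℝ) * T / m with hpdef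
  have hpmono : Monotone p := by
    intro i j hij
    simp only [hpdef]
    gcongr
  have hp0 : p 0 = 0 := by simp [hpdef]
  have hpm : p m = T := by
    simp only [hpdef]
    field_simp
  have hpnonneg : ∀ i, 0 ≤ p i := fun i => hp0 ▸ hpmono (Nat.zero_le i)
  have hple : ∀ i, i ≤ m → p i ≤ T := fun i hi => hpm ▸ hpmono hi
  have hpstep : ∀ i, p (i+1) - p i = T / m := by
    intro i
    simp only [hpdef, Nat.cast_add, Nat.cast_one]
    ring
  -- eventual hypotheses
  have hE1 := (Metric.tendstoUniformlyOn_iff.mp (hxconv T hT)) (ε / (8 * C)) (by positivity)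
  have hE2 := (Metric.tendstoUniformlyOn_iff.mp (hyconv T hT)) (ε / (8 * m * M)) (by positivity)
  have hE3 := (Metric.tendstoUniformlyOn_iff.mp (hyconv T hT)) (1/2 : ℝ) (by norm_num)
  filter_upwards [hE1, hE2, hE3] with n h1 h2 h3
  intro t ht
  have ht0 : (0:ℝ) ≤ t := ht.1
  have htT : t ≤ T := ht.2
  set μn := (Y n).measure with hμndef
  set μ := Ylim.measure with hμdef
  -- bound on Y n t - Y n 0
  have hYnC : Y n t - Y n 0 ≤ C := by
    have ha := h3 t ht
    have hb := h3 0 ⟨le_refl 0, hT.le⟩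
    rw [Real.dist_eq] at ha hb
    have ha' := abs_lt.mp ha
    have hb' := abs_lt.mp hb
    have hc : ylim t ≤ ylim T := hmono ht0 hT.le htT
    simp only [hCdef]
    linarith [ha'.1, ha'.2, hb'.1, hb'.2]
  have hylimC : ylim t - ylim 0 ≤ C := by
    have hc : ylim t ≤ ylim T := hmono ht0 hT.le htT
    simp only [hCdef]; linarith
  -- the pieces
  set sI : ℕ → Set ℝ := fun i => Ioc (p i) (min (p (i+1)) t) with hsIdef
  have hsub : ∀ i ∈ Finset.range m, sI i ⊆ Ioc 0 T := by
    intro i hi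
    exact Set.Ioc_subset_Ioc (hpnonneg i)
      ((min_le_left _ _).trans (hple (i+1) (Finset.mem_range.mp hi)))
  have hsub0t : Ioc (0:ℝ) t ⊆ Ioc 0 T := Ioc_subset_Ioc le_rfl htT
  have hcover : Ioc 0 t = ⋃ i ∈ Finset.range m, sI i := by
    have h1 : Ioc (0:ℝ) t = Ioc (p 0) (p m) ∩ Ioc 0 t := by
      rw [hp0, hpm, Set.inter_eq_right.mpr hsub0t]
    rw [h1, ← iUnion_Ioc_succ p hpmono m, Set.iUnion₂_inter]
    refine Set.iUnion₂_congr fun i hi => ?_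
    rw [Ioc_inter_Ioc, sup_eq_left.mpr (hpnonneg i)]
  have hdisj : (↑(Finset.range m) : Set ℕ).Pairwise (Function.onFun Disjoint sI) := by
    have key : ∀ i j : ℕ, i < j → Disjoint (sI i) (sI j) := by
      intro i j hij
      rw [Set.Ioc_disjoint_Ioc]
      calc min (min (p (i+1)) t) (min (p (j+1)) t)
          ≤ p (i+1) := (min_le_left _ _).trans (min_le_left _ _)
        _ ≤ p j := hpmono hij
        _ ≤ max (p i) (p j) := le_max_right _ _
    intro i _ j _ hij
    rcases lt_or_gt_of_ne hij with h | h
    · exact key i j h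
    · exact (key j i h).symm
  -- measure values of pieces
  have hμn_sI : ∀ i, (μn (sI i)).toReal = Y n (min (p (i+1)) t) - Y n (min (p i) t) :=
    fun i => stj_toReal (Y n) _ _ _ (hpmono (Nat.le_succ i))
  have hmemmin : ∀ i, min (p i) t ∈ Icc (0:ℝ) T :=
    fun i => ⟨le_min (hpnonneg i) ht0, (min_le_right _ _).trans htT⟩
  have hμ_sI : ∀ i, (μ (sI i)).toReal = ylim (min (p (i+1)) t) - ylim (min (p i) t) := by
    intro i
    rw [hμdef, stj_toReal Ylim _ _ _ (hpmono (Nat.le_succ i)),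
      hYeq _ (hmemmin (i+1)).1, hYeq _ (hmemmin i).1]
  -- telescoping sums
  have hsumYn : ∑ i ∈ Finset.range m, (Y n (min (p (i+1)) t) - Y n (min (p i) t))
      = Y n t - Y n 0 := by
    rw [Finset.sum_range_sub (fun i => Y n (min (p i) t)), hp0, hpm,
      min_eq_right htT, min_eq_left ht0]
  have hsumY : ∑ i ∈ Finset.range m, (ylim (min (p (i+1)) t) - ylim (min (p i) t))
      = ylim t - ylim 0 := by
    rw [Finset.sum_range_sub (fun i => ylim (min (p i) t)), hp0, hpm,
      min_eq_right htT, min_eq_left ht0]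
  -- integrability
  haveI hfinn : IsFiniteMeasure (μn.restrict (Ioc 0 T)) := ⟨by
    rw [Measure.restrict_apply_univ, hμndef, StieltjesFunction.measure_Ioc]
    exact ENNReal.ofReal_lt_top⟩
  haveI hfinl : IsFiniteMeasure (μ.restrict (Ioc 0 T)) := ⟨by
    rw [Measure.restrict_apply_univ, hμdef, StieltjesFunction.measure_Ioc]
    exact ENNReal.ofReal_lt_top⟩
  have hxn_int : IntegrableOn (x n) (Ioc 0 T) μn := by
    refine ⟨rightCont_aesm (x n) (hx n).1 μn T,
      HasFiniteIntegral.of_bounded (C := M0 + ε/(8*C)) ?_⟩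
    refine ae_restrict_of_forall_mem measurableSet_Ioc ?_
    intro s hs
    have hs' : s ∈ Icc (0:ℝ) T := ⟨hs.1.le, hs.2⟩
    have hd := h1 s hs'
    rw [Real.dist_eq] at hd
    have hb := hM0 s hs'
    rw [Real.norm_eq_abs] at hb ⊢
    have key : |x n s| ≤ |xlim s| + |x n s - xlim s| := by
      have := abs_add_le (xlim s) (x n s - xlim s)
      simpa using this
    rw [abs_sub_comm] at key
    linarith
  have hxlim_intn : IntegrableOn xlim (Ioc 0 T) μn := by
    refine ⟨(hxlim.mono (fun s hs => hs.1.le)).aestronglyMeasurable measurableSet_Ioc,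
      HasFiniteIntegral.of_bounded (C := M0) ?_⟩
    refine ae_restrict_of_forall_mem measurableSet_Ioc ?_
    intro s hs
    exact hM0 s ⟨hs.1.le, hs.2⟩
  have hxlim_intl : IntegrableOn xlim (Ioc 0 T) μ := by
    refine ⟨(hxlim.mono (fun s hs => hs.1.le)).aestronglyMeasurable measurableSet_Ioc,
      HasFiniteIntegral.of_bounded (C := M0) ?_⟩
    refine ae_restrict_of_forall_mem measurableSet_Ioc ?_
    intro s hs
    exact hM0 s ⟨hs.1.le, hs.2⟩
  -- decomposition of integrals over (0, t]
  have hdecomp : ∀ (ν : Measure ℝ) (f : ℝ → ℝ), IntegrableOn f (Ioc 0 T) ν →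
      ∫ s in Ioc 0 t, f s ∂ν = ∑ i ∈ Finset.range m, ∫ s in sI i, f s ∂ν := by
    intro ν f hf
    rw [hcover]
    exact integral_biUnion_finset _ (fun i _ => measurableSet_Ioc) hdisj
      (fun i hi => hf.mono_set (hsub i hi))
  -- per-piece estimate for a Stieltjes measure
  have hpiece : ∀ (G : StieltjesFunction ℝ), ∀ i ∈ Finset.range m,
      IntegrableOn xlim (sI i) G.measure →
      |(∫ s in sI i, xlim s ∂G.measure) - xlim (p i) * (G.measure (sI i)).toReal|
        ≤ ε/(8*C) * (G.measure (sI i)).toReal := by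
    intro G i hi hint
    have hfin : G.measure (sI i) < ⊤ := by
      rw [hsIdef]
      simp only []
      rw [StieltjesFunction.measure_Ioc]
      exact ENNReal.ofReal_lt_top
    have hconst : ∫ _ in sI i, xlim (p i) ∂G.measure
        = xlim (p i) * (G.measure (sI i)).toReal := by
      rw [setIntegral_const, smul_eq_mul, mul_comm, measureReal_def]
    have hintc : IntegrableOn (fun _ => xlim (p i)) (sI i) G.measure :=
      integrableOn_const hfin.ne
    rw [← hconst, ← integral_sub hint hintc]
    have hbd : ∀ s ∈ sI i, ‖xlim s - xlim (p i)‖ ≤ ε/(8*C) := by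
      intro s hs
      have him : i < m := Finset.mem_range.mp hi
      have hsmem : s ∈ Icc (0:ℝ) T :=
        ⟨(hpnonneg i).trans hs.1.le, hs.2.trans ((min_le_left _ _).trans (hple (i+1) him))⟩
      have hpmem : p i ∈ Icc (0:ℝ) T := ⟨hpnonneg i, hple i him.le⟩
      have hdist : dist s (p i) < δ := by
        rw [Real.dist_eq, abs_of_nonneg (by linarith [hs.1])]
        have h1 : s - p i ≤ p (i+1) - p i := by
          have := hs.2.trans (min_le_left _ _)
          linarith
        rw [hpstep i] at h1
        linarith [hmesh]
      have := hδ' s hsmem (p i) hpmem hdist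
      rw [Real.dist_eq] at this
      rw [Real.norm_eq_abs]
      exact this.le
    rw [← Real.norm_eq_abs]
    exact norm_setIntegral_le_of_norm_le_const hfin hbd
  -- the approximating sums
  set An := ∑ i ∈ Finset.range m, xlim (p i) * (Y n (min (p (i+1)) t) - Y n (min (p i) t)) with hAndef
  set A := ∑ i ∈ Finset.range m, xlim (p i) * (ylim (min (p (i+1)) t) - ylim (min (p i) t)) with hAdef
  -- Term 3 : |∫ xlim dμn - An| ≤ ε/8
  have hterm3 : |(∫ s in Ioc 0 t, xlim s ∂μn) - An| ≤ ε/8 := by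
    rw [hdecomp μn xlim hxlim_intn, hAndef]
    have : ∑ i ∈ Finset.range m, xlim (p i) * (Y n (min (p (i+1)) t) - Y n (min (p i) t))
        = ∑ i ∈ Finset.range m, xlim (p i) * (μn (sI i)).toReal := by
      refine Finset.sum_congr rfl fun i _ => ?_
      rw [hμn_sI i]
    rw [this, ← Finset.sum_sub_distrib]
    calc |∑ i ∈ Finset.range m,
            ((∫ s in sI i, xlim s ∂μn) - xlim (p i) * (μn (sI i)).toReal)|
        ≤ ∑ i ∈ Finset.range m,
            |(∫ s in sI i, xlim s ∂μn) - xlim (p i) * (μn (sI i)).toReal| :=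
          Finset.abs_sum_le_sum_abs _ _
      _ ≤ ∑ i ∈ Finset.range m, ε/(8*C) * (μn (sI i)).toReal := by
          refine Finset.sum_le_sum fun i hi => ?_
          exact hpiece (Y n) i hi (hxlim_intn.mono_set (hsub i hi))
      _ = ε/(8*C) * (Y n t - Y n 0) := by
          rw [← Finset.mul_sum]
          congr 1
          rw [← hsumYn]
          exact Finset.sum_congr rfl fun i _ => hμn_sI i
      _ ≤ ε/(8*C) * C := by
          apply mul_le_mul_of_nonneg_left hYnC (by positivity)
      _ = ε/8 := by field_simp
  -- Term 1 : |∫ xlim dμ - A| ≤ ε/8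
  have hterm1 : |(∫ s in Ioc 0 t, xlim s ∂μ) - A| ≤ ε/8 := by
    rw [hdecomp μ xlim hxlim_intl, hAdef]
    have : ∑ i ∈ Finset.range m, xlim (p i) * (ylim (min (p (i+1)) t) - ylim (min (p i) t))
        = ∑ i ∈ Finset.range m, xlim (p i) * (μ (sI i)).toReal := by
      refine Finset.sum_congr rfl fun i _ => ?_
      rw [hμ_sI i]
    rw [this, ← Finset.sum_sub_distrib]
    calc |∑ i ∈ Finset.range m,
            ((∫ s in sI i, xlim s ∂μ) - xlim (p i) * (μ (sI i)).toReal)|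
        ≤ ∑ i ∈ Finset.range m,
            |(∫ s in sI i, xlim s ∂μ) - xlim (p i) * (μ (sI i)).toReal| :=
          Finset.abs_sum_le_sum_abs _ _
      _ ≤ ∑ i ∈ Finset.range m, ε/(8*C) * (μ (sI i)).toReal := by
          refine Finset.sum_le_sum fun i hi => ?_
          exact hpiece Ylim i hi (hxlim_intl.mono_set (hsub i hi))
      _ = ε/(8*C) * (ylim t - ylim 0) := by
          rw [← Finset.mul_sum]
          congr 1
          rw [← hsumY]
          exact Finset.sum_congr rfl fun i _ => hμ_sI i
      _ ≤ ε/(8*C) * C := by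
          apply mul_le_mul_of_nonneg_left hylimC (by positivity)
      _ = ε/8 := by field_simp
  -- Term 2 : |An - A| ≤ ε/4
  have hterm2 : |An - A| ≤ ε/4 := by
    rw [hAndef, hAdef, ← Finset.sum_sub_distrib]
    calc |∑ i ∈ Finset.range m,
            (xlim (p i) * (Y n (min (p (i+1)) t) - Y n (min (p i) t))
              - xlim (p i) * (ylim (min (p (i+1)) t) - ylim (min (p i) t)))|
        ≤ ∑ i ∈ Finset.range m, M0 * (2 * (ε / (8 * m * M))) := by
          refine (Finset.abs_sum_le_sum_abs _ _).trans (Finset.sum_le_sum fun i hi => ?_)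
          rw [← mul_sub, abs_mul]
          have him : i < m := Finset.mem_range.mp hi
          have h2a := h2 (min (p (i+1)) t) (hmemmin (i+1))
          have h2b := h2 (min (p i) t) (hmemmin i)
          rw [Real.dist_eq] at h2a h2b
          have habs : |(Y n (min (p (i+1)) t) - Y n (min (p i) t))
              - (ylim (min (p (i+1)) t) - ylim (min (p i) t))|
              ≤ 2 * (ε / (8 * m * M)) := by
            have h2a' := abs_lt.mp h2a
            have h2b' := abs_lt.mp h2b
            rw [abs_le]
            constructor <;> [skip; skip] <;> linarith [h2a'.1, h2a'.2, h2b'.1, h2b'.2]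
          have hbM0 : |xlim (p i)| ≤ M0 := by
            have := hM0 (p i) ⟨hpnonneg i, hple i him.le⟩
            rwa [Real.norm_eq_abs] at this
          exact mul_le_mul hbM0 habs (abs_nonneg _) hM0'
      _ = (m : ℝ) * (M0 * (2 * (ε / (8 * m * M)))) := by
          rw [Finset.sum_const, Finset.card_range, nsmul_eq_mul]
      _ ≤ ε/4 := by
          have hMM : M0 / M ≤ 1 := by
            rw [div_le_one hM]; simp [hMdef]
          have heq : (m : ℝ) * (M0 * (2 * (ε / (8 * m * M)))) = ε / 4 * (M0 / M) := by
            field_simp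
            ring
          rw [heq]
          calc ε / 4 * (M0 / M) ≤ ε / 4 * 1 :=
                mul_le_mul_of_nonneg_left hMM (by positivity)
            _ = ε / 4 := mul_one _
  -- Term 4 : |∫ xlim dμn - ∫ x n dμn| ≤ ε/8
  have hterm4 : |(∫ s in Ioc 0 t, xlim s ∂μn) - ∫ s in Ioc 0 t, x n s ∂μn| ≤ ε/8 := by
    have hfin : μn (Ioc 0 t) < ⊤ := by
      rw [hμndef, StieltjesFunction.measure_Ioc]; exact ENNReal.ofReal_lt_top
    rw [← integral_sub (hxlim_intn.mono_set hsub0t) (hxn_int.mono_set hsub0t), ← Real.norm_eq_abs]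
    have hbd : ∀ s ∈ Ioc (0:ℝ) t, ‖xlim s - x n s‖ ≤ ε/(8*C) := by
      intro s hs
      have := h1 s ⟨hs.1.le, hs.2.trans htT⟩
      rw [Real.dist_eq] at this
      rw [Real.norm_eq_abs]
      exact this.le
    have hsm : AEStronglyMeasurable (fun s => xlim s - x n s) (μn.restrict (Ioc 0 t)) :=
      ((hxlim_intn.mono_set hsub0t).1).sub ((hxn_int.mono_set hsub0t).1)
    calc ‖∫ s in Ioc 0 t, (xlim s - x n s) ∂μn‖
        ≤ ε/(8*C) * (μn (Ioc 0 t)).toReal :=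
          norm_setIntegral_le_of_norm_le_const hfin hbd
      _ ≤ ε/(8*C) * C := by
          apply mul_le_mul_of_nonneg_left ?_ (by positivity)
          rw [hμndef, StieltjesFunction.measure_Ioc,
            ENNReal.toReal_ofReal (sub_nonneg.2 ((Y n).mono ht0))]
          exact hYnC
      _ = ε/8 := by field_simp
  -- conclusion
  rw [Real.dist_eq]
  have : |(∫ s in Ioc 0 t, xlim s ∂μ) - ∫ s in Ioc 0 t, x n s ∂μn|
      ≤ |(∫ s in Ioc 0 t, xlim s ∂μ) - A| + |A - An|
        + |An - ∫ s in Ioc 0 t, xlim s ∂μn|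
        + |(∫ s in Ioc 0 t, xlim s ∂μn) - ∫ s in Ioc 0 t, x n s ∂μn| := by
    have h1' := abs_sub_le (∫ s in Ioc 0 t, xlim s ∂μ) A (∫ s in Ioc 0 t, x n s ∂μn)
    have h2' := abs_sub_le A An (∫ s in Ioc 0 t, x n s ∂μn)
    have h3' := abs_sub_le An (∫ s in Ioc 0 t, xlim s ∂μn) (∫ s in Ioc 0 t, x n s ∂μn)
    linarith
  have habsA : |A - An| ≤ ε/4 := by rw [abs_sub_comm]; exact hterm2
  have habs3 : |An - ∫ s in Ioc 0 t, xlim s ∂μn| ≤ ε/8 := by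
    rw [abs_sub_comm]; exact hterm3
  calc |(∫ s in Ioc 0 t, xlim s ∂μ) - ∫ s in Ioc 0 t, x n s ∂μn|
      ≤ |(∫ s in Ioc 0 t, xlim s ∂μ) - A| + |A - An|
        + |An - ∫ s in Ioc 0 t, xlim s ∂μn|
        + |(∫ s in Ioc 0 t, xlim s ∂μn) - ∫ s in Ioc 0 t, x n s ∂μn| := this
    _ ≤ ε/8 + ε/4 + ε/8 + ε/8 := by
        gcongr
    _ < ε := by linarith
end
end

section
/- Let (ξ_N, η_N) and (ξ, η) be random pairs on a probability space, with η_N, η nonnegative real random variables satisfying E[η_N] = E[η] = 1, and ξ_N, ξ taking values in a complete separable metric space X. Let P̃_N and P̃ be the probability measures with densities η_N and η respectively with respect to P. If (ξ_N, η_N) converges in distribution to (ξ, η) under P, then the law of (ξ_N, η_N) under P̃_N converges weakly to the law of (ξ, η) under P̃. -/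
open Filter Topology MeasureTheory

noncomputable section

/-- Clamp function `t ↦ min (max t 0) M` as a bounded continuous function. -/
private def clampC (M : ℕ) : BoundedContinuousFunction ℝ ℝ :=
  ⟨⟨fun t => min (max t 0) (M : ℝ), by continuity⟩, (M : ℝ), by
    intro x y
    have h1 : ∀ t : ℝ, 0 ≤ min (max t 0) (M : ℝ) :=
      fun t => le_min (le_max_right t 0) (Nat.cast_nonneg M)
    have h2 : ∀ t : ℝ, min (max t 0) (M : ℝ) ≤ M := fun t => min_le_right _ _
    rw [Real.dist_eq, abs_sub_le_iff]
    constructor <;> linarith [h1 x, h1 y, h2 x, h2 y]⟩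

@[simp] private lemma clampC_apply (M : ℕ) (t : ℝ) :
    clampC M t = min (max t 0) (M : ℝ) := rfl

private lemma aesm_clamp_iff {Ω : Type*} {m : MeasurableSpace Ω} {μ : Measure Ω}
    (u e : Ω → ℝ) (he : AEMeasurable e μ) (he0 : ∀ᵐ ω ∂μ, 0 ≤ e ω)
    (M : ℕ) (hM : 1 ≤ M) :
    AEStronglyMeasurable (fun ω => u ω * e ω) μ ↔
      AEStronglyMeasurable (fun ω => u ω * min (max (e ω) 0) (M : ℝ)) μ := by
  have hr : Measurable fun t : ℝ => min (max t 0) (M : ℝ) / t := by fun_prop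
  have hs : Measurable fun t : ℝ => t / min (max t 0) (M : ℝ) := by fun_prop
  constructor
  · intro h
    have heq : (fun ω => u ω * min (max (e ω) 0) (M : ℝ))
        = fun ω => (u ω * e ω) * (min (max (e ω) 0) (M : ℝ) / e ω) := by
      funext ω
      rcases eq_or_ne (e ω) 0 with h0 | h0
      · simp [h0, min_eq_left (Nat.cast_nonneg M : (0:ℝ) ≤ (M:ℝ))]
      · field_simp
    rw [heq]
    exact h.mul ((hr.comp_aemeasurable he).aestronglyMeasurable)
  · intro h
    refine (h.mul ((hs.comp_aemeasurable he).aestronglyMeasurable)).congr ?_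
    filter_upwards [he0] with ω hω
    rcases lt_or_eq_of_le hω with h0 | h0
    · have hmax : max (e ω) 0 = e ω := max_eq_left hω
      have hclamp : 0 < min (max (e ω) 0) (M : ℝ) := by
        rw [hmax]
        exact lt_min h0 (by exact_mod_cast Nat.cast_pos.mpr hM)
      have hne := hclamp.ne'
      simp only [Pi.mul_apply, Function.comp_apply]
      field_simp
    · simp [← h0]

private lemma key_bound {Ω : Type*} {m : MeasurableSpace Ω} {μ : Measure Ω}
    [IsProbabilityMeasure μ] {X : Type*} [MetricSpace X]
    (f : BoundedContinuousFunction (X × ℝ) ℝ)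
    (ζ : Ω → X) (e : Ω → ℝ) (he0 : ∀ᵐ ω ∂μ, 0 ≤ e ω) (hei : Integrable e μ)
    (he1 : ∫ ω, e ω ∂μ = 1) (M : ℕ) (hM : 1 ≤ M) :
    |(∫ ω, f (ζ ω, e ω) * e ω ∂μ) - ∫ ω, f (ζ ω, e ω) * min (max (e ω) 0) (M : ℝ) ∂μ|
      ≤ ‖f‖ * (1 - ∫ ω, min (max (e ω) 0) (M : ℝ) ∂μ) := by
  set u : Ω → ℝ := fun ω => f (ζ ω, e ω) with hu
  have hub : ∀ ω, |u ω| ≤ ‖f‖ := by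
    intro ω
    rw [← Real.norm_eq_abs]
    exact f.norm_coe_le_norm _
  have hclamp_nonneg : ∀ t : ℝ, 0 ≤ min (max t 0) (M : ℝ) :=
    fun t => le_min (le_max_right t 0) (Nat.cast_nonneg M)
  have hclampmeas : AEStronglyMeasurable (fun ω => min (max (e ω) 0) (M : ℝ)) μ :=
    ((by fun_prop : Measurable fun t : ℝ => min (max t 0) (M : ℝ)).comp_aemeasurable
      hei.aemeasurable).aestronglyMeasurable
  have hclampint : Integrable (fun ω => min (max (e ω) 0) (M : ℝ)) μ := by
    refine Integrable.mono' (integrable_const (M : ℝ)) hclampmeas ?_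
    filter_upwards with ω
    rw [Real.norm_eq_abs, abs_of_nonneg (hclamp_nonneg _)]
    exact min_le_right _ _
  have hclample : ∫ ω, min (max (e ω) 0) (M : ℝ) ∂μ ≤ 1 := by
    rw [← he1]
    refine integral_mono_ae hclampint hei ?_
    filter_upwards [he0] with ω hω
    rw [max_eq_left hω]
    exact min_le_left _ _
  have hrhs : 0 ≤ ‖f‖ * (1 - ∫ ω, min (max (e ω) 0) (M : ℝ) ∂μ) :=
    mul_nonneg (norm_nonneg f) (by linarith)
  by_cases hmeas : AEStronglyMeasurable (fun ω => u ω * e ω) μ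
  · have hmeas2 := (aesm_clamp_iff u e hei.aemeasurable he0 M hM).mp hmeas
    have hint1 : Integrable (fun ω => u ω * e ω) μ := by
      refine Integrable.mono' (hei.abs.const_mul ‖f‖) hmeas ?_
      filter_upwards with ω
      rw [Real.norm_eq_abs, abs_mul]
      exact mul_le_mul_of_nonneg_right (hub ω) (abs_nonneg _)
    have hint2 : Integrable (fun ω => u ω * min (max (e ω) 0) (M : ℝ)) μ := by
      refine Integrable.mono' (integrable_const (‖f‖ * (M : ℝ))) hmeas2 ?_
      filter_upwards with ω
      rw [Real.norm_eq_abs, abs_mul]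
      have h1 : |min (max (e ω) 0) (M : ℝ)| ≤ (M : ℝ) := by
        rw [abs_of_nonneg (hclamp_nonneg _)]
        exact min_le_right _ _
      exact mul_le_mul (hub ω) h1 (abs_nonneg _) (norm_nonneg f)
    rw [← integral_sub hint1 hint2]
    have habs : |∫ ω, (u ω * e ω - u ω * min (max (e ω) 0) (M : ℝ)) ∂μ|
        ≤ ∫ ω, |u ω * e ω - u ω * min (max (e ω) 0) (M : ℝ)| ∂μ := by
      have := norm_integral_le_integral_norm
        (μ := μ) (f := fun ω => u ω * e ω - u ω * min (max (e ω) 0) (M : ℝ))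
      simpa [Real.norm_eq_abs] using this
    refine habs.trans ?_
    have hmono : ∫ ω, |u ω * e ω - u ω * min (max (e ω) 0) (M : ℝ)| ∂μ
        ≤ ∫ ω, ‖f‖ * (e ω - min (max (e ω) 0) (M : ℝ)) ∂μ := by
      refine integral_mono_ae (hint1.sub hint2).abs ((hei.sub hclampint).const_mul ‖f‖) ?_
      filter_upwards [he0] with ω hω
      rw [← mul_sub, abs_mul]
      have h2 : 0 ≤ e ω - min (max (e ω) 0) (M : ℝ) := by
        rw [max_eq_left hω]
        have := min_le_left (e ω) (M : ℝ)
        linarith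
      rw [abs_of_nonneg h2]
      exact mul_le_mul_of_nonneg_right (hub ω) h2
    refine hmono.trans ?_
    rw [integral_const_mul, integral_sub hei hclampint, he1]
  · have hmeas2 : ¬ AEStronglyMeasurable (fun ω => u ω * min (max (e ω) 0) (M : ℝ)) μ :=
      fun h => hmeas ((aesm_clamp_iff u e hei.aemeasurable he0 M hM).mpr h)
    rw [integral_undef (fun h => hmeas h.aestronglyMeasurable),
        integral_undef (fun h => hmeas2 h.aestronglyMeasurable)]
    simpa using hrhs

private lemma clamp_tendsto {Ω : Type*} {m : MeasurableSpace Ω} {μ : Measure Ω}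
    [IsProbabilityMeasure μ] (e : Ω → ℝ) (he0 : ∀ᵐ ω ∂μ, 0 ≤ e ω)
    (hei : Integrable e μ) :
    Tendsto (fun M : ℕ => ∫ ω, min (max (e ω) 0) (M : ℝ) ∂μ) atTop (𝓝 (∫ ω, e ω ∂μ)) := by
  refine tendsto_integral_of_dominated_convergence (fun ω => |e ω|) ?_ hei.abs ?_ ?_
  · intro M
    exact ((by fun_prop : Measurable fun t : ℝ => min (max t 0) (M : ℝ)).comp_aemeasurable
      hei.aemeasurable).aestronglyMeasurable
  · intro M
    filter_upwards with ω
    rw [Real.norm_eq_abs, abs_of_nonneg (le_min (le_max_right _ _) (Nat.cast_nonneg M))]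
    exact (min_le_left _ _).trans (max_le (le_abs_self _) (abs_nonneg _))
  · filter_upwards [he0] with ω hω
    refine tendsto_atTop_of_eventually_const (i₀ := ⌈e ω⌉₊) fun M hM => ?_
    rw [max_eq_left hω, min_eq_left]
    exact (Nat.le_ceil _).trans (by exact_mod_cast hM)

/-- **Lemma 6.6.** Let `(ξ_N, η_N)` and `(ξ, η)` be random pairs on `(Ω, F, P)`, with
`η_N, η ≥ 0` real, `E[η_N] = E[η] = 1`, and `ξ_N, ξ` with values in a complete separable
metric space `X`. If `(ξ_N, η_N) ⇒ (ξ, η)` (weak convergence of laws on `X × ℝ`, expressed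
by bounded continuous test functions), then the law of `(ξ_N, η_N)` under the reweighted
measure `dP̃_N = η_N dP` converges weakly to the law of `(ξ, η)` under `dP̃ = η dP`. -/
theorem weak_convergence_girsanov_densities
    {Ω : Type*} {m : MeasurableSpace Ω} (μ : Measure Ω) [IsProbabilityMeasure μ]
    {X : Type*} [MetricSpace X] [CompleteSpace X] [TopologicalSpace.SeparableSpace X]
    (ξ : ℕ → Ω → X) (η : ℕ → Ω → ℝ) (ξlim : Ω → X) (ηlim : Ω → ℝ)
    (hηpos : ∀ N, ∀ᵐ ω ∂μ, 0 ≤ η N ω) (hηlimpos : ∀ᵐ ω ∂μ, 0 ≤ ηlim ω)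
    (hηint : ∀ N, Integrable (η N) μ) (hηlimint : Integrable ηlim μ)
    (hη1 : ∀ N, ∫ ω, η N ω ∂μ = 1) (hηlim1 : ∫ ω, ηlim ω ∂μ = 1)
    (hconv : ∀ f : BoundedContinuousFunction (X × ℝ) ℝ,
      Tendsto (fun N => ∫ ω, f (ξ N ω, η N ω) ∂μ) atTop (nhds (∫ ω, f (ξlim ω, ηlim ω) ∂μ))) :
    ∀ f : BoundedContinuousFunction (X × ℝ) ℝ,
      Tendsto (fun N => ∫ ω, f (ξ N ω, η N ω) * η N ω ∂μ) atTop
        (nhds (∫ ω, f (ξlim ω, ηlim ω) * ηlim ω ∂μ)) := by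
  intro f
  rw [Metric.tendsto_atTop]
  intro ε hε
  set C := ‖f‖ with hCdef
  have hC0 : 0 ≤ C := norm_nonneg f
  set δ := ε / (8 * (C + 1)) with hδdef
  have hδ0 : 0 < δ := by positivity
  have hεδ : 8 * (C + 1) * δ = ε := by
    rw [hδdef]
    field_simp
  -- choose the truncation level M
  have hMCT := clamp_tendsto ηlim hηlimpos hηlimint
  rw [hηlim1] at hMCT
  have hev : ∀ᶠ M : ℕ in atTop,
      (1 - δ < ∫ ω, min (max (ηlim ω) 0) (M : ℝ) ∂μ) ∧ 1 ≤ M :=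
    (hMCT.eventually (eventually_gt_nhds (by linarith : 1 - δ < 1))).and (eventually_ge_atTop 1)
  obtain ⟨M, hMδ, hM1⟩ := hev.exists
  -- convergence of the truncated integrals
  have hgconv : Tendsto (fun N => ∫ ω, f (ξ N ω, η N ω) * min (max (η N ω) 0) (M : ℝ) ∂μ)
      atTop (𝓝 (∫ ω, f (ξlim ω, ηlim ω) * min (max (ηlim ω) 0) (M : ℝ) ∂μ)) :=
    hconv (f * ((clampC M).compContinuous ⟨Prod.snd, continuous_snd⟩))
  have hhconv : Tendsto (fun N => ∫ ω, min (max (η N ω) 0) (M : ℝ) ∂μ)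
      atTop (𝓝 (∫ ω, min (max (ηlim ω) 0) (M : ℝ) ∂μ)) :=
    hconv ((clampC M).compContinuous ⟨Prod.snd, continuous_snd⟩)
  obtain ⟨N₁, hN₁⟩ := Metric.tendsto_atTop.mp hgconv δ hδ0
  obtain ⟨N₂, hN₂⟩ := Metric.tendsto_atTop.mp hhconv δ hδ0
  refine ⟨max N₁ N₂, fun N hN => ?_⟩
  have h1 := hN₁ N (le_trans (le_max_left _ _) hN)
  have h2 := hN₂ N (le_trans (le_max_right _ _) hN)
  have kb1 := key_bound f (ξ N) (η N) (hηpos N) (hηint N) (hη1 N) M hM1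
  have kb2 := key_bound f ξlim ηlim hηlimpos hηlimint hηlim1 M hM1
  rw [Real.dist_eq] at h1 h2 ⊢
  set JN := ∫ ω, f (ξ N ω, η N ω) * η N ω ∂μ
  set IN := ∫ ω, f (ξ N ω, η N ω) * min (max (η N ω) 0) (M : ℝ) ∂μ
  set J := ∫ ω, f (ξlim ω, ηlim ω) * ηlim ω ∂μ
  set I := ∫ ω, f (ξlim ω, ηlim ω) * min (max (ηlim ω) 0) (M : ℝ) ∂μ
  set mN := ∫ ω, min (max (η N ω) 0) (M : ℝ) ∂μ
  set mL := ∫ ω, min (max (ηlim ω) 0) (M : ℝ) ∂μ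
  have hbN : 1 - mN < 2 * δ := by
    rcases abs_lt.mp h2 with ⟨hl, hr⟩
    linarith
  have step1 : |JN - J| ≤ |JN - IN| + |IN - I| + |I - J| := by
    calc |JN - J| ≤ |JN - IN| + |IN - J| := abs_sub_le _ _ _
      _ ≤ |JN - IN| + (|IN - I| + |I - J|) := by gcongr; exact abs_sub_le _ _ _
      _ = |JN - IN| + |IN - I| + |I - J| := by ring
  have hkb2' : |I - J| ≤ C * (1 - mL) := by rw [abs_sub_comm]; exact kb2
  have hb1 : C * (1 - mN) ≤ C * (2 * δ) := mul_le_mul_of_nonneg_left hbN.le hC0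
  have hb2 : C * (1 - mL) ≤ C * δ := mul_le_mul_of_nonneg_left (by linarith) hC0
  nlinarith [step1, kb1, h1, hkb2', hb1, hb2]
end
end

section
/- For the continuous-time Markov jump process Z^{N,x} on {k/N : k ≥ 0} which from state k/N jumps to (k+1)/N at rate kNσ²/2 + kθ and to (k−1)/N at rate kNσ²/2 + k(k−1)γ/N, started at ⌊Nx⌋/N, one has for each T > 0: sup_{N≥1} sup_{0≤t≤T} E[(Z^{N,x}_t)⁴] < ∞. -/
set_option maxHeartbeats 1000000

open MeasureTheory ProbabilityTheory Filter Topology Set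
open scoped ENNReal

noncomputable section

/-- `M` is a local martingale w.r.t. the filtration `F` under `μ`. -/
def IsLocMart {Ω : Type*} {m : MeasurableSpace Ω} (F : Filtration ℝ m) (μ : Measure Ω)
    (M : ℝ → Ω → ℝ) : Prop :=
  ∃ τ : ℕ → Ω → ℝ,
    (∀ n, IsStoppingTime F (fun ω => ((τ n ω : ℝ) : WithTop ℝ))) ∧
    (∀ᵐ ω ∂μ, Tendsto (fun n => τ n ω) atTop atTop) ∧
    (∀ n, Martingale (fun s ω => M (min s (τ n ω)) ω) F μ)

/-- Generator of the discrete-mass logistic branching process `Z^{N,x}`: from state `z = k/N`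
it jumps to `z + 1/N` at rate `kNσ²/2 + kθ` and to `z - 1/N` at rate `kNσ²/2 + k(k-1)γ/N`. -/
def genZN (N : ℕ) (σ θ γ : ℝ) (f : ℝ → ℝ) (z : ℝ) : ℝ :=
  (N * z) * ((N * σ ^ 2) / 2 + θ) * (f (z + 1 / N) - f z)
    + (N * z) * ((N * σ ^ 2) / 2 + γ * (z - 1 / N)) * (f (z - 1 / N) - f z)

/-- truncated fourth power -/
def fK (K : ℕ) (z : ℝ) : ℝ := (min (max z 0) K) ^ 4

lemma fK_nonneg (K : ℕ) (z : ℝ) : 0 ≤ fK K z := by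
  have h : 0 ≤ min (max z 0) K := le_min (le_max_right _ _) (Nat.cast_nonneg _)
  exact pow_nonneg h 4

lemma fK_le (K : ℕ) (z : ℝ) : fK K z ≤ (K : ℝ) ^ 4 := by
  have h0 : 0 ≤ min (max z 0) K := le_min (le_max_right _ _) (Nat.cast_nonneg _)
  exact pow_le_pow_left₀ h0 (min_le_right _ _) 4

lemma fK_abs_le (K : ℕ) (z : ℝ) : |fK K z| ≤ (K : ℝ) ^ 4 := by
  rw [abs_of_nonneg (fK_nonneg K z)]; exact fK_le K z

lemma fK_continuous (K : ℕ) : Continuous (fK K) := by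
  unfold fK; fun_prop

lemma fK_of_lt (K : ℕ) {z : ℝ} (h0 : 0 ≤ z) (h1 : z ≤ K) : fK K z = z ^ 4 := by
  unfold fK; rw [max_eq_left h0, min_eq_left h1]

lemma fK_of_ge (K : ℕ) {z : ℝ} (h1 : (K : ℝ) ≤ z) : fK K z = (K : ℝ) ^ 4 := by
  unfold fK
  rw [max_eq_left (le_trans (Nat.cast_nonneg _) h1), min_eq_right h1]

lemma fK_le_pow (K : ℕ) {z : ℝ} (h0 : 0 ≤ z) : fK K z ≤ z ^ 4 := by
  unfold fK
  rw [max_eq_left h0]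
  exact pow_le_pow_left₀ (le_min h0 (Nat.cast_nonneg _)) (min_le_left _ _) 4

lemma fK_mono_K {K K' : ℕ} (h : K ≤ K') (z : ℝ) : fK K z ≤ fK K' z := by
  unfold fK
  have h0 : 0 ≤ min (max z 0) K := le_min (le_max_right _ _) (Nat.cast_nonneg _)
  exact pow_le_pow_left₀ h0 (min_le_min le_rfl (Nat.cast_le.2 h)) 4

/-- Main generator estimate on the lattice. -/
lemma genZN_fK_le (σ θ γ : ℝ) (hσ : 0 ≤ σ) (hθ : 0 ≤ θ) (hγ : 0 ≤ γ)
    (N K k : ℕ) (hN : 1 ≤ N) :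
    genZN N σ θ γ (fK K) ((k : ℝ) / N) ≤ (7 * σ ^ 2 + 15 * θ + 1) * (1 + fK K ((k : ℝ) / N)) := by
  have hN0 : (0:ℝ) < N := by exact_mod_cast Nat.lt_of_lt_of_le Nat.zero_lt_one hN
  have hC0 : (0:ℝ) < 7 * σ ^ 2 + 15 * θ + 1 := by positivity
  set z : ℝ := (k : ℝ) / N with hzdef
  have hz0 : 0 ≤ z := by positivity
  have hRHS : 0 ≤ (7 * σ ^ 2 + 15 * θ + 1) * (1 + fK K z) := by
    have := fK_nonneg K z; nlinarith
  rcases Nat.eq_zero_or_pos k with rfl | hk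
  · have hz : z = 0 := by simp [hzdef]
    rw [hz]; simp only [genZN, mul_zero, zero_mul, zero_add, mul_zero]
    simpa [hz] using hRHS
  · -- k ≥ 1
    have hhz : 1 / (N:ℝ) ≤ z := by
      rw [hzdef]
      gcongr
      exact_mod_cast hk
    clear_value z
    have hz1 : 0 ≤ z - 1 / N := sub_nonneg.2 hhz
    by_cases hzK : (K : ℝ) ≤ z
    · -- above the cap: generator is nonpositive
      have e1 : fK K (z + 1 / N) - fK K z = 0 := by
        have : (K : ℝ) ≤ z + 1 / N := le_trans hzK (by linarith [one_div_pos.2 hN0])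
        rw [fK_of_ge K hzK, fK_of_ge K this]
        ring
      have e3 : fK K (z - 1 / N) - fK K z ≤ 0 := by
        rw [fK_of_ge K hzK]; linarith [fK_le K (z - 1 / N)]
      have hcoef : 0 ≤ (N : ℝ) * z * ((N * σ ^ 2) / 2 + γ * (z - 1 / N)) :=
        mul_nonneg (mul_nonneg (Nat.cast_nonneg _) hz0)
          (add_nonneg (by positivity) (mul_nonneg hγ hz1))
      unfold genZN
      rw [e1]
      have h2 := mul_nonneg hcoef (neg_nonneg.2 e3)
      nlinarith [hRHS]
    · -- below the cap
      push_neg at hzK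
      have ez : fK K z = z ^ 4 := fK_of_lt K hz0 hzK.le
      have em : fK K (z - 1 / N) = (z - 1 / N) ^ 4 := fK_of_lt K hz1 (by linarith [one_div_pos.2 hN0])
      have ep : fK K (z + 1 / N) ≤ (z + 1 / N) ^ 4 := fK_le_pow K (by positivity)
      have coef1 : 0 ≤ (N : ℝ) * z * ((N * σ ^ 2) / 2 + θ) := by positivity
      set h : ℝ := 1 / N with hh
      have h0 : 0 < h := by positivity
      have h1 : h ≤ 1 := by
        rw [hh]; rw [div_le_one hN0]; exact_mod_cast hN
      have hNe : (N : ℝ) = 1 / h := by rw [hh]; field_simp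
      clear_value h
      -- reduce to polynomial estimate
      have t1 : (N : ℝ) * z * ((N * σ ^ 2) / 2 + θ) * (fK K (z + h) - z ^ 4)
          ≤ (N : ℝ) * z * ((N * σ ^ 2) / 2 + θ) * ((z + h) ^ 4 - z ^ 4) := by
        apply mul_le_mul_of_nonneg_left _ coef1
        linarith
      have hneg : (z - h) ^ 4 - z ^ 4 ≤ 0 := by
        have := pow_le_pow_left₀ hz1 (by linarith : z - h ≤ z) 4
        linarith
      have t2 : (N : ℝ) * z * ((N * σ ^ 2) / 2 + γ * (z - h)) * (fK K (z - h) - z ^ 4)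
          ≤ (N : ℝ) * z * ((N * σ ^ 2) / 2) * ((z - h) ^ 4 - z ^ 4) := by
        rw [em]
        have hg : 0 ≤ (N : ℝ) * z * (γ * (z - h)) * (z ^ 4 - (z - h) ^ 4) :=
          mul_nonneg (mul_nonneg (mul_nonneg (Nat.cast_nonneg _) hz0)
            (mul_nonneg hγ hz1)) (by linarith)
        nlinarith
      have expand : (N : ℝ) * z * ((N * σ ^ 2) / 2 + θ) * ((z + h) ^ 4 - z ^ 4)
            + (N : ℝ) * z * ((N * σ ^ 2) / 2) * ((z - h) ^ 4 - z ^ 4)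
          = z * (σ ^ 2 / 2) * (12 * z ^ 2 + 2 * h ^ 2)
            + θ * z * (4 * z ^ 3 + 6 * z ^ 2 * h + 4 * z * h ^ 2 + h ^ 3) := by
        rw [hNe]; field_simp; ring
      -- polynomial facts
      have p1 : z ≤ 1 + z ^ 4 := by nlinarith [sq_nonneg (z - 1), sq_nonneg (z ^ 2 - 1)]
      have p2 : z ^ 2 ≤ 1 + z ^ 4 := by nlinarith [sq_nonneg (z ^ 2 - 1)]
      have p3 : z ^ 3 ≤ 1 + z ^ 4 := by
        nlinarith [mul_nonneg (mul_nonneg hz0 hz0) (sq_nonneg (z - 1)), sq_nonneg (z ^ 2 - 1)]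
      have p4 : z ^ 4 ≤ 1 + z ^ 4 := by linarith
      -- eliminate h
      have hb : z * (σ ^ 2 / 2) * (12 * z ^ 2 + 2 * h ^ 2)
            + θ * z * (4 * z ^ 3 + 6 * z ^ 2 * h + 4 * z * h ^ 2 + h ^ 3)
          ≤ z * (σ ^ 2 / 2) * (12 * z ^ 2 + 2)
            + θ * z * (4 * z ^ 3 + 6 * z ^ 2 + 4 * z + 1) := by
        have w1 : 0 ≤ σ ^ 2 * z * (1 - h ^ 2) :=
          mul_nonneg (mul_nonneg (sq_nonneg σ) hz0) (by nlinarith)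
        have w2 : 0 ≤ θ * (z * z ^ 2) * (1 - h) :=
          mul_nonneg (mul_nonneg hθ (mul_nonneg hz0 (sq_nonneg z))) (by linarith)
        have w3 : 0 ≤ θ * (z * z) * (1 - h ^ 2) :=
          mul_nonneg (mul_nonneg hθ (mul_nonneg hz0 hz0)) (by nlinarith)
        have w4 : 0 ≤ θ * z * (1 - h ^ 3) :=
          mul_nonneg (mul_nonneg hθ hz0) (by nlinarith)
        nlinarith [w1, w2, w3, w4]
      have hfinal : z * (σ ^ 2 / 2) * (12 * z ^ 2 + 2)
            + θ * z * (4 * z ^ 3 + 6 * z ^ 2 + 4 * z + 1)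
          ≤ (7 * σ ^ 2 + 15 * θ + 1) * (1 + z ^ 4) := by
        have q3 : σ ^ 2 * z ^ 3 ≤ σ ^ 2 * (1 + z ^ 4) := mul_le_mul_of_nonneg_left p3 (sq_nonneg σ)
        have q1 : σ ^ 2 * z ≤ σ ^ 2 * (1 + z ^ 4) := mul_le_mul_of_nonneg_left p1 (sq_nonneg σ)
        have r1 : θ * z ≤ θ * (1 + z ^ 4) := mul_le_mul_of_nonneg_left p1 hθ
        have r2 : θ * z ^ 2 ≤ θ * (1 + z ^ 4) := mul_le_mul_of_nonneg_left p2 hθ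
        have r3 : θ * z ^ 3 ≤ θ * (1 + z ^ 4) := mul_le_mul_of_nonneg_left p3 hθ
        have r4 : θ * z ^ 4 ≤ θ * (1 + z ^ 4) := mul_le_mul_of_nonneg_left p4 hθ
        linarith [q3, q1, r1, r2, r3, r4, pow_nonneg hz0 4]
      unfold genZN
      rw [← hh, ez]
      calc (N : ℝ) * z * ((N * σ ^ 2) / 2 + θ) * (fK K (z + h) - z ^ 4)
            + (N : ℝ) * z * ((N * σ ^ 2) / 2 + γ * (z - h)) * (fK K (z - h) - z ^ 4)
          ≤ (N : ℝ) * z * ((N * σ ^ 2) / 2 + θ) * ((z + h) ^ 4 - z ^ 4)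
            + (N : ℝ) * z * ((N * σ ^ 2) / 2) * ((z - h) ^ 4 - z ^ 4) := by
            exact add_le_add t1 t2
        _ ≤ (7 * σ ^ 2 + 15 * θ + 1) * (1 + z ^ 4) := by
            rw [expand]; linarith


/-- Crude global bound for the generator applied to `fK K` on the lattice. -/
lemma genZN_fK_abs_le (σ θ γ : ℝ) (hσ : 0 ≤ σ) (hθ : 0 ≤ θ) (hγ : 0 ≤ γ) (N K : ℕ)
    (hN : 1 ≤ N) (k : ℕ) :
    |genZN N σ θ γ (fK K) ((k : ℝ) / N)| ≤
      (N : ℝ) * (K + 1) * ((N * σ ^ 2) / 2 + θ) * (2 * K ^ 4)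
        + (N : ℝ) * (K + 1) * ((N * σ ^ 2) / 2 + γ * (K + 1)) * (2 * K ^ 4) := by
  have hN0 : (0:ℝ) < N := by exact_mod_cast Nat.lt_of_lt_of_le Nat.zero_lt_one hN
  set z : ℝ := (k : ℝ) / N with hzdef
  have hz0 : 0 ≤ z := by positivity
  have hinv : 0 < 1 / (N : ℝ) := by positivity
  have hinv1 : 1 / (N : ℝ) ≤ 1 := by
    rw [div_le_one hN0]; exact_mod_cast hN
  clear_value z
  by_cases hc : (K : ℝ) ≤ z - 1 / N
  · have e1 : fK K (z - 1 / N) = (K : ℝ) ^ 4 := fK_of_ge K hc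
    have e2 : fK K z = (K : ℝ) ^ 4 := fK_of_ge K (by linarith)
    have e3 : fK K (z + 1 / N) = (K : ℝ) ^ 4 := fK_of_ge K (by linarith)
    unfold genZN
    rw [e1, e2, e3]
    simp only [sub_self, mul_zero, add_zero, abs_zero]
    positivity
  · push_neg at hc
    have hzle : z ≤ (K : ℝ) + 1 := by linarith
    have hd1 : |fK K (z + 1 / N) - fK K z| ≤ 2 * (K : ℝ) ^ 4 := by
      calc |fK K (z + 1 / N) - fK K z| ≤ |fK K (z + 1 / N)| + |fK K z| := abs_sub _ _
        _ ≤ 2 * (K : ℝ) ^ 4 := by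
            have := fK_abs_le K (z + 1 / N); have := fK_abs_le K z; linarith
    have hd2 : |fK K (z - 1 / N) - fK K z| ≤ 2 * (K : ℝ) ^ 4 := by
      calc |fK K (z - 1 / N) - fK K z| ≤ |fK K (z - 1 / N)| + |fK K z| := abs_sub _ _
        _ ≤ 2 * (K : ℝ) ^ 4 := by
            have := fK_abs_le K (z - 1 / N); have := fK_abs_le K z; linarith
    have hA1 : |(N : ℝ) * z * ((N * σ ^ 2) / 2 + θ)| ≤ (N : ℝ) * (K + 1) * ((N * σ ^ 2) / 2 + θ) := by
      rw [abs_of_nonneg (by positivity)]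
      apply mul_le_mul_of_nonneg_right _ (by positivity)
      apply mul_le_mul_of_nonneg_left hzle (Nat.cast_nonneg _)
    have hA2 : |(N : ℝ) * z * ((N * σ ^ 2) / 2 + γ * (z - 1 / N))|
        ≤ (N : ℝ) * (K + 1) * ((N * σ ^ 2) / 2 + γ * (K + 1)) := by
      rw [abs_mul]
      have h1 : |(N : ℝ) * z| ≤ (N : ℝ) * (K + 1) := by
        rw [abs_of_nonneg (by positivity)]
        apply mul_le_mul_of_nonneg_left hzle (Nat.cast_nonneg _)
      have h2 : |(N * σ ^ 2) / 2 + γ * (z - 1 / N)| ≤ (N * σ ^ 2) / 2 + γ * (K + 1) := by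
        rw [abs_le]
        constructor
        · have : γ * (-(K + 1)) ≤ γ * (z - 1 / N) :=
            mul_le_mul_of_nonneg_left (by linarith) hγ
          nlinarith
        · have : γ * (z - 1 / N) ≤ γ * (K + 1) :=
            mul_le_mul_of_nonneg_left (by linarith) hγ
          linarith
      exact mul_le_mul h1 h2 (abs_nonneg _) (by positivity)
    unfold genZN
    calc |(N : ℝ) * z * ((N * σ ^ 2) / 2 + θ) * (fK K (z + 1 / N) - fK K z)
          + (N : ℝ) * z * ((N * σ ^ 2) / 2 + γ * (z - 1 / N)) * (fK K (z - 1 / N) - fK K z)|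
        ≤ |(N : ℝ) * z * ((N * σ ^ 2) / 2 + θ) * (fK K (z + 1 / N) - fK K z)|
          + |(N : ℝ) * z * ((N * σ ^ 2) / 2 + γ * (z - 1 / N)) * (fK K (z - 1 / N) - fK K z)| :=
          abs_add_le _ _
      _ ≤ (N : ℝ) * (K + 1) * ((N * σ ^ 2) / 2 + θ) * (2 * K ^ 4)
          + (N : ℝ) * (K + 1) * ((N * σ ^ 2) / 2 + γ * (K + 1)) * (2 * K ^ 4) := by
          rw [abs_mul ((N : ℝ) * z * ((N * σ ^ 2) / 2 + θ)) _,
            abs_mul ((N : ℝ) * z * ((N * σ ^ 2) / 2 + γ * (z - 1 / N))) _]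
          exact add_le_add (mul_le_mul hA1 hd1 (abs_nonneg _) (by positivity))
            (mul_le_mul hA2 hd2 (abs_nonneg _) (by positivity))

/-! ### step approximation of times from the right -/

def stepT (m : ℕ) (r : ℝ) : ℝ := ((⌊(m + 1 : ℝ) * r⌋ : ℤ) : ℝ) / (m + 1) + 1 / (m + 1)

lemma stepT_gt (m : ℕ) (r : ℝ) : r < stepT m r := by
  have hm : (0:ℝ) < m + 1 := by positivity
  have h := Int.lt_floor_add_one ((m + 1 : ℝ) * r)
  rw [stepT, ← add_div, lt_div_iff₀ hm]
  linarith [h]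

lemma stepT_le (m : ℕ) (r : ℝ) : stepT m r ≤ r + 1 / (m + 1) := by
  have hm : (0:ℝ) < m + 1 := by positivity
  have h := Int.floor_le ((m + 1 : ℝ) * r)
  rw [stepT, ← add_div, div_le_iff₀ hm]
  have he : (r + 1 / ((m:ℝ) + 1)) * ((m:ℝ) + 1) = r * ((m:ℝ) + 1) + 1 := by field_simp
  rw [he]; linarith

lemma stepT_tendsto (r : ℝ) :
    Tendsto (fun m : ℕ => stepT m r) atTop (nhdsWithin r (Ici r)) := by
  apply tendsto_nhdsWithin_of_tendsto_nhds_of_eventually_within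
  · have h2 : Tendsto (fun m : ℕ => r + 1 / ((m : ℝ) + 1)) atTop (nhds r) := by
      have := tendsto_one_div_add_atTop_nhds_zero_nat (𝕜 := ℝ)
      have h3 := tendsto_const_nhds (x := r) (f := atTop (α := ℕ)) |>.add this
      simpa using h3
    exact tendsto_of_tendsto_of_tendsto_of_le_of_le tendsto_const_nhds h2
      (fun m => (stepT_gt m r).le) (fun m => stepT_le m r)
  · exact Eventually.of_forall fun m => (stepT_gt m r).le

lemma measurable_comp_stepT {g : ℝ → ℝ} (m : ℕ) : Measurable fun r : ℝ => g (stepT m r) := by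
  have h1 : Measurable fun r : ℝ => (⌊(m + 1 : ℝ) * r⌋ : ℤ) :=
    Int.measurable_floor.comp (measurable_id.const_mul _)
  have h2 : Measurable fun k : ℤ => g ((k : ℝ) / (m + 1) + 1 / (m + 1)) := measurable_from_top
  exact h2.comp h1

lemma measurable_comp_stepT_prod {Ω : Type*} [MeasurableSpace Ω] (Z : ℝ → Ω → ℝ)
    (hZ : ∀ t, Measurable (Z t)) (g : ℝ → ℝ) (hg : Measurable g) (m : ℕ) :
    Measurable fun p : Ω × ℝ => g (Z (stepT m p.2) p.1) := by
  have h2 : Measurable fun q : Ω × ℤ => g (Z ((q.2 : ℝ) / (m + 1) + 1 / (m + 1)) q.1) :=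
    measurable_from_prod_countable_left fun k =>
      hg.comp (hZ ((k : ℝ) / (m + 1) + 1 / (m + 1)))
  have h1 : Measurable fun p : Ω × ℝ => (p.1, (⌊(m + 1 : ℝ) * p.2⌋ : ℤ)) :=
    measurable_fst.prodMk (Int.measurable_floor.comp (measurable_snd.const_mul _))
  exact h2.comp h1

/-- a.e.-measurability of a right-continuous path composed with a function. -/
lemma aestronglyMeasurable_of_rightCont {Y : ℝ → ℝ}
    (hrc : ∀ t : ℝ, 0 ≤ t → Tendsto Y (nhdsWithin t (Ici t)) (nhds (Y t)))
    {s : Set ℝ} (hs : MeasurableSet s) (hsub : s ⊆ Ici 0) (g : ℝ → ℝ) (hg : Continuous g) :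
    AEStronglyMeasurable (fun r => g (Y r)) (volume.restrict s) := by
  apply aestronglyMeasurable_of_tendsto_ae (u := atTop)
    (f := fun m : ℕ => fun r : ℝ => (g ∘ Y) (stepT m r))
  · exact fun m => (measurable_comp_stepT (g := g ∘ Y) m).aestronglyMeasurable
  · filter_upwards [ae_restrict_mem hs] with r hr
    exact (hg.tendsto (Y r)).comp ((hrc r (hsub hr)).comp (stepT_tendsto r))

/-! ### A Gronwall-type lemma in `ℝ≥0∞` -/

lemma gronwall_sup {T c a : ℝ} (hT : 0 < T) (hc : 1 ≤ c) (ha : 0 ≤ a)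
    (v : ℝ → ℝ≥0∞) (B : ℝ≥0∞) (hB : B ≠ ⊤)
    (hbdd : ∀ t ∈ Icc (0:ℝ) T, v t ≤ B)
    (hrec : ∀ t ∈ Icc (0:ℝ) T, v t ≤ ENNReal.ofReal a
      + ∫⁻ r in Icc (0:ℝ) t, (ENNReal.ofReal c * (1 + v r))) :
    ∀ t ∈ Icc (0:ℝ) T, v t ≤ ENNReal.ofReal (2 * (a + c * T) * Real.exp (2 * c * T)) := by
  have hc0 : 0 < c := lt_of_lt_of_le zero_lt_one hc
  set S : ℝ≥0∞ := ⨆ t' : Icc (0:ℝ) T, ENNReal.ofReal (Real.exp (-(2 * c * t'))) * v t' with hS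
  have hSB : S ≤ B := by
    apply iSup_le
    rintro ⟨t', ht'⟩
    calc ENNReal.ofReal (Real.exp (-(2 * c * t'))) * v t'
        ≤ 1 * B := by
          apply mul_le_mul'
          · rw [ENNReal.ofReal_le_one]
            rw [Real.exp_le_one_iff]
            nlinarith [ht'.1]
          · exact hbdd t' ht'
      _ = B := one_mul B
  have hSfin : S ≠ ⊤ := (lt_of_le_of_lt hSB hB.lt_top).ne
  have hvle : ∀ r ∈ Icc (0:ℝ) T, v r ≤ ENNReal.ofReal (Real.exp (2 * c * r)) * S := by
    intro r hr
    have h1 : ENNReal.ofReal (Real.exp (-(2 * c * r))) * v r ≤ S :=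
      le_iSup (fun t' : Icc (0:ℝ) T => ENNReal.ofReal (Real.exp (-(2 * c * t'))) * v t')
        ⟨r, hr⟩
    calc v r = ENNReal.ofReal (Real.exp (2 * c * r))
          * (ENNReal.ofReal (Real.exp (-(2 * c * r))) * v r) := by
          rw [← mul_assoc, ← ENNReal.ofReal_mul (Real.exp_nonneg _), ← Real.exp_add]
          norm_num
      _ ≤ ENNReal.ofReal (Real.exp (2 * c * r)) * S := mul_le_mul' le_rfl h1
  have key : ∀ t ∈ Icc (0:ℝ) T,
      v t ≤ ENNReal.ofReal (a + c * T) + ENNReal.ofReal (Real.exp (2 * c * t) / 2) * S := by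
    intro t ht
    have ht0 : 0 ≤ t := ht.1
    have step1 : v t ≤ ENNReal.ofReal a
        + ∫⁻ r in Icc (0:ℝ) t, (ENNReal.ofReal c
          + ENNReal.ofReal (c * Real.exp (2 * c * r)) * S) := by
      refine (hrec t ht).trans (add_le_add le_rfl (lintegral_mono_ae ?_))
      filter_upwards [ae_restrict_mem measurableSet_Icc] with r hr
      have hrT : r ∈ Icc (0:ℝ) T := ⟨hr.1, hr.2.trans ht.2⟩
      calc ENNReal.ofReal c * (1 + v r)
          = ENNReal.ofReal c + ENNReal.ofReal c * v r := by rw [mul_add, mul_one]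
        _ ≤ ENNReal.ofReal c + ENNReal.ofReal c
            * (ENNReal.ofReal (Real.exp (2 * c * r)) * S) :=
            add_le_add le_rfl (mul_le_mul' le_rfl (hvle r hrT))
        _ = ENNReal.ofReal c + ENNReal.ofReal (c * Real.exp (2 * c * r)) * S := by
            rw [← mul_assoc, ← ENNReal.ofReal_mul hc0.le]
    have hmeas : Measurable fun r : ℝ => ENNReal.ofReal (c * Real.exp (2 * c * r)) := by
      fun_prop
    have step2 : (∫⁻ r in Icc (0:ℝ) t, (ENNReal.ofReal c
          + ENNReal.ofReal (c * Real.exp (2 * c * r)) * S))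
        = ENNReal.ofReal c * volume (Icc (0:ℝ) t)
          + (∫⁻ r in Icc (0:ℝ) t, ENNReal.ofReal (c * Real.exp (2 * c * r))) * S := by
      rw [lintegral_add_left measurable_const, lintegral_const,
        Measure.restrict_apply MeasurableSet.univ, univ_inter,
        lintegral_mul_const' S _ hSfin]
    have Iexp : (∫⁻ r in Icc (0:ℝ) t, ENNReal.ofReal (c * Real.exp (2 * c * r)))
        = ENNReal.ofReal ((Real.exp (2 * c * t) - 1) / 2) := by
      rw [← ofReal_integral_eq_lintegral_ofReal]
      · congr 1
        rw [integral_Icc_eq_integral_Ioc, ← intervalIntegral.integral_of_le ht0]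
        have : ∫ x in (0:ℝ)..t, c * Real.exp (2 * c * x)
            = c * ∫ x in (0:ℝ)..t, Real.exp (2 * c * x) := by
          rw [intervalIntegral.integral_const_mul]
        rw [this, intervalIntegral.integral_comp_mul_left (fun x => Real.exp x)
          ((by positivity : (0:ℝ) < 2 * c).ne'), integral_exp]
        simp only [mul_zero, Real.exp_zero, smul_eq_mul]
        field_simp
      · exact (Continuous.integrableOn_Icc (by fun_prop))
      · filter_upwards with r
        positivity
    have hvol : ENNReal.ofReal c * volume (Icc (0:ℝ) t) ≤ ENNReal.ofReal (c * T) := by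
      rw [Real.volume_Icc, ← ENNReal.ofReal_mul hc0.le]
      apply ENNReal.ofReal_le_ofReal
      nlinarith [ht.2]
    calc v t ≤ ENNReal.ofReal a + (ENNReal.ofReal c * volume (Icc (0:ℝ) t)
          + (∫⁻ r in Icc (0:ℝ) t, ENNReal.ofReal (c * Real.exp (2 * c * r))) * S) := by
          rw [← step2]; exact step1
      _ ≤ ENNReal.ofReal a + (ENNReal.ofReal (c * T)
          + ENNReal.ofReal (Real.exp (2 * c * t) / 2) * S) := by
          rw [Iexp]
          refine add_le_add le_rfl (add_le_add hvol (mul_le_mul' ?_ le_rfl))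
          apply ENNReal.ofReal_le_ofReal
          linarith [Real.exp_pos (2 * c * t)]
      _ = ENNReal.ofReal (a + c * T) + ENNReal.ofReal (Real.exp (2 * c * t) / 2) * S := by
          rw [← add_assoc, ← ENNReal.ofReal_add ha (by positivity)]
  have hSle : S ≤ ENNReal.ofReal (a + c * T) + S * ENNReal.ofReal (1 / 2) := by
    apply iSup_le
    rintro ⟨t, ht⟩
    calc ENNReal.ofReal (Real.exp (-(2 * c * t))) * v t
        ≤ ENNReal.ofReal (Real.exp (-(2 * c * t)))
          * (ENNReal.ofReal (a + c * T) + ENNReal.ofReal (Real.exp (2 * c * t) / 2) * S) :=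
          mul_le_mul' le_rfl (key t ht)
      _ = ENNReal.ofReal (Real.exp (-(2 * c * t)) * (a + c * T))
          + ENNReal.ofReal (Real.exp (-(2 * c * t)) * (Real.exp (2 * c * t) / 2)) * S := by
          rw [mul_add, ← ENNReal.ofReal_mul (Real.exp_nonneg _), ← mul_assoc,
            ← ENNReal.ofReal_mul (Real.exp_nonneg _)]
      _ ≤ ENNReal.ofReal (a + c * T) + S * ENNReal.ofReal (1 / 2) := by
          apply add_le_add
          · apply ENNReal.ofReal_le_ofReal
            have h1 : Real.exp (-(2 * c * t)) ≤ 1 := by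
              rw [Real.exp_le_one_iff]; nlinarith [ht.1]
            nlinarith [Real.exp_nonneg (-(2 * c * t)), ht.1, mul_nonneg hc0.le hT.le]
          · have : Real.exp (-(2 * c * t)) * (Real.exp (2 * c * t) / 2) = 1 / 2 := by
              rw [← mul_div_assoc, ← Real.exp_add]
              norm_num
            rw [this, mul_comm]
  have hStoReal : S.toReal ≤ 2 * (a + c * T) := by
    have hfin : ENNReal.ofReal (a + c * T) + S * ENNReal.ofReal (1 / 2) ≠ ⊤ := by
      apply ENNReal.add_ne_top.2
      exact ⟨ENNReal.ofReal_ne_top, ENNReal.mul_ne_top hSfin ENNReal.ofReal_ne_top⟩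
    have h2 := ENNReal.toReal_mono hfin hSle
    rw [ENNReal.toReal_add ENNReal.ofReal_ne_top
        (ENNReal.mul_ne_top hSfin ENNReal.ofReal_ne_top), ENNReal.toReal_mul,
      ENNReal.toReal_ofReal (by positivity : (0:ℝ) ≤ a + c * T),
      ENNReal.toReal_ofReal (by norm_num : (0:ℝ) ≤ 1 / 2)] at h2
    linarith
  intro t ht
  calc v t ≤ ENNReal.ofReal (Real.exp (2 * c * t)) * S := hvle t ht
    _ ≤ ENNReal.ofReal (Real.exp (2 * c * T)) * ENNReal.ofReal (2 * (a + c * T)) := by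
        apply mul_le_mul'
        · exact ENNReal.ofReal_le_ofReal (Real.exp_le_exp.2 (by nlinarith [ht.2]))
        · rw [← ENNReal.ofReal_toReal hSfin]
          exact ENNReal.ofReal_le_ofReal hStoReal
    _ = ENNReal.ofReal (2 * (a + c * T) * Real.exp (2 * c * T)) := by
        rw [← ENNReal.ofReal_mul (Real.exp_nonneg _)]
        ring_nf

/-- `Z` is (a version of) the Markov jump process `Z^{N,x}` of the paper: it lives on the
lattice `{k/N : k ∈ ℕ}`, starts at `⌊Nx⌋/N`, has càdlàg paths, and solves the martingale
problem for the generator `genZN`. -/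
def IsZNProc {Ω : Type*} {m : MeasurableSpace Ω} (μ : Measure Ω) (F : Filtration ℝ m)
    (N : ℕ) (σ θ γ x : ℝ) (Z : ℝ → Ω → ℝ) : Prop :=
  (∀ᵐ ω ∂μ, Z 0 ω = (Nat.floor ((N : ℝ) * x) : ℝ) / N) ∧
  (∀ᵐ ω ∂μ, ∀ t : ℝ, 0 ≤ t → ∃ k : ℕ, Z t ω = (k : ℝ) / N) ∧
  (∀ᵐ ω ∂μ, ∀ t : ℝ, 0 ≤ t →
    Tendsto (fun s => Z s ω) (nhdsWithin t (Ici t)) (nhds (Z t ω))) ∧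
  Adapted F Z ∧
  (∀ f : ℝ → ℝ, (∃ C : ℝ, ∀ z : ℝ, |f z| ≤ C) → Measurable f →
    IsLocMart F μ (fun t ω =>
      f (Z t ω) - f (Z 0 ω) - ∫ r in Icc (0:ℝ) t, genZN N σ θ γ f (Z r ω)))

/-- **Lemma 4.1 (fourth moment bound).** For the jump processes `Z^{N,x}` (from state `k/N`,
up to `(k+1)/N` at rate `kNσ²/2 + kθ`, down to `(k-1)/N` at rate `kNσ²/2 + k(k-1)γ/N`,
started at `⌊Nx⌋/N`) one has, for each `T > 0`,
`sup_{N ≥ 1} sup_{0 ≤ t ≤ T} E[(Z^{N,x}_t)⁴] < ∞`. -/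
theorem ZN_fourth_moment_bound (σ θ γ x : ℝ) (hσ : 0 ≤ σ) (hθ : 0 ≤ θ) (hγ : 0 ≤ γ)
    (hx : 0 < x)
    (Ω : ℕ → Type) (mΩ : ∀ N, MeasurableSpace (Ω N)) (μ : ∀ N, Measure (Ω N))
    (hprob : ∀ N, IsProbabilityMeasure (μ N))
    (F : ∀ N, Filtration ℝ (mΩ N)) (Z : ∀ N, ℝ → Ω N → ℝ)
    (hZ : ∀ N : ℕ, 1 ≤ N → IsZNProc (μ N) (F N) N σ θ γ x (Z N)) :
    ∀ T : ℝ, 0 < T → ∃ C : ℝ, ∀ N : ℕ, 1 ≤ N → ∀ t : ℝ, 0 ≤ t → t ≤ T →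
      ∫⁻ ω, ENNReal.ofReal ((Z N t ω) ^ 4) ∂(μ N) ≤ ENNReal.ofReal C := by
  intro T hT
  set c : ℝ := 7 * σ ^ 2 + 15 * θ + 1 with hcdef
  have hc1 : (1:ℝ) ≤ c := by nlinarith [sq_nonneg σ]
  have hc0 : (0:ℝ) < c := lt_of_lt_of_le zero_lt_one hc1
  refine ⟨2 * (x ^ 4 + c * T) * Real.exp (2 * c * T), ?_⟩
  intro N hN t ht htT
  haveI := hprob N
  obtain ⟨hinit, hlat, hrc, hadp, hmart⟩ := hZ N hN
  have hN0 : (0:ℝ) < N := by exact_mod_cast Nat.lt_of_lt_of_le Nat.zero_lt_one hN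
  have hZmeas : ∀ u : ℝ, Measurable (Z N u) :=
    fun u => (hadp u).mono ((F N).le u) le_rfl
  -- the capped moment functions
  set v : ℕ → ℝ → ℝ≥0∞ :=
    fun K u => ∫⁻ ω, ENNReal.ofReal (fK K (Z N u ω)) ∂(μ N) with hvdef
  have hvmeasω : ∀ K : ℕ, ∀ u : ℝ, Measurable fun ω => ENNReal.ofReal (fK K (Z N u ω)) :=
    fun K u => ENNReal.measurable_ofReal.comp ((fK_continuous K).measurable.comp (hZmeas u))
  -- main uniform-in-K estimate
  have key : ∀ K : ℕ, ∀ u ∈ Icc (0:ℝ) T,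
      v K u ≤ ENNReal.ofReal (2 * (x ^ 4 + c * T) * Real.exp (2 * c * T)) := by
    intro K
    apply gronwall_sup hT hc1 (by positivity : (0:ℝ) ≤ x ^ 4) (v K)
      (ENNReal.ofReal ((K : ℝ) ^ 4)) ENNReal.ofReal_ne_top
    · -- boundedness by K^4
      intro u hu
      calc v K u ≤ ∫⁻ _, ENNReal.ofReal ((K : ℝ) ^ 4) ∂(μ N) :=
            lintegral_mono fun ω => ENNReal.ofReal_le_ofReal (fK_le K _)
        _ = ENNReal.ofReal ((K : ℝ) ^ 4) := by simp
    · -- the Gronwall recursion, from the martingale problem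
      intro s hs
      classical
      obtain ⟨τ, hτstop, hτtend, hτmart⟩ :=
        hmart (fK K) ⟨(K : ℝ) ^ 4, fK_abs_le K⟩ (fK_continuous K).measurable
      set g : ℝ → ℝ := genZN N σ θ γ (fK K) with hgdef
      have hgcont : Continuous g := by
        rw [hgdef]; unfold genZN fK; fun_prop
      set Bc : ℝ := (N : ℝ) * (K + 1) * ((N * σ ^ 2) / 2 + θ) * (2 * K ^ 4)
        + (N : ℝ) * (K + 1) * ((N * σ ^ 2) / 2 + γ * (K + 1)) * (2 * K ^ 4) with hBc
      have hI0 : ∀ u : ℝ, u ≤ 0 → ∀ ω, (∫ r in Icc (0:ℝ) u, g (Z N r ω)) = 0 := by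
        intro u hu ω
        have hnull : volume (Icc (0:ℝ) u) = 0 := by
          rw [Real.volume_Icc]
          simp only [ENNReal.ofReal_eq_zero]
          linarith
        rw [Measure.restrict_eq_zero.2 hnull, integral_zero_measure]
      have hint_f0 : Integrable (fun ω => fK K (Z N 0 ω)) (μ N) := by
        apply Integrable.mono' (integrable_const ((K : ℝ) ^ 4))
          ((fK_continuous K).measurable.comp (hZmeas 0)).aestronglyMeasurable
        filter_upwards with ω
        rw [Real.norm_eq_abs]; exact fK_abs_le K _
      -- a.e. path facts
      have hpath : ∀ᵐ ω ∂(μ N),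
          (∀ u : ℝ, IntegrableOn (fun r => g (Z N r ω)) (Icc 0 u) volume)
          ∧ (∀ u : ℝ, IntegrableOn (fun r => c * (1 + fK K (Z N r ω))) (Icc 0 u) volume)
          ∧ (∀ u : ℝ, 0 ≤ u → u ≤ s → (∫ r in Icc (0:ℝ) u, g (Z N r ω))
                ≤ ∫ r in Icc (0:ℝ) s, c * (1 + fK K (Z N r ω))) := by
        filter_upwards [hlat, hrc] with ω hω hωrc
        have hmg : ∀ u : ℝ, AEStronglyMeasurable (fun r => g (Z N r ω))
            (volume.restrict (Icc 0 u)) := fun u =>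
          aestronglyMeasurable_of_rightCont hωrc measurableSet_Icc (fun r hr => hr.1) g hgcont
        have hmc : ∀ u : ℝ, AEStronglyMeasurable (fun r => c * (1 + fK K (Z N r ω)))
            (volume.restrict (Icc 0 u)) := fun u => by
          have hfc : Continuous (fK K) := fK_continuous K
          exact aestronglyMeasurable_of_rightCont hωrc measurableSet_Icc (fun r hr => hr.1)
            (fun y => c * (1 + fK K y)) (by fun_prop)
        have hbg : ∀ u : ℝ, IntegrableOn (fun r => g (Z N r ω)) (Icc 0 u) volume := by
          intro u
          apply Integrable.mono' (integrable_const Bc) (hmg u)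
          filter_upwards [ae_restrict_mem measurableSet_Icc] with r hr
          obtain ⟨k, hk⟩ := hω r hr.1
          rw [Real.norm_eq_abs, hk, hgdef, hBc]
          exact genZN_fK_abs_le σ θ γ hσ hθ hγ N K hN k
        have hbc : ∀ u : ℝ, IntegrableOn (fun r => c * (1 + fK K (Z N r ω))) (Icc 0 u) volume := by
          intro u
          apply Integrable.mono' (integrable_const (c * (1 + (K : ℝ) ^ 4))) (hmc u)
          filter_upwards with r
          have h1 := fK_nonneg K (Z N r ω); have h2 := fK_le K (Z N r ω)
          rw [Real.norm_eq_abs, abs_of_nonneg (by nlinarith)]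
          nlinarith
        refine ⟨hbg, hbc, ?_⟩
        intro u hu0 hus
        calc (∫ r in Icc (0:ℝ) u, g (Z N r ω))
            ≤ ∫ r in Icc (0:ℝ) u, c * (1 + fK K (Z N r ω)) := by
              apply setIntegral_mono_on (hbg u) (hbc u) measurableSet_Icc
              intro r hr
              obtain ⟨k, hk⟩ := hω r hr.1
              rw [hk, hgdef]
              calc genZN N σ θ γ (fK K) ((k : ℝ) / N)
                  ≤ (7 * σ ^ 2 + 15 * θ + 1) * (1 + fK K ((k : ℝ) / N)) :=
                    genZN_fK_le σ θ γ hσ hθ hγ N K k hN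
                _ = c * (1 + fK K ((k : ℝ) / N)) := by rw [hcdef]
          _ ≤ ∫ r in Icc (0:ℝ) s, c * (1 + fK K (Z N r ω)) := by
              apply setIntegral_mono_set (hbc s)
              · filter_upwards with r
                simp only [Pi.zero_apply]
                have h1 := fK_nonneg K (Z N r ω); nlinarith
              · exact (Icc_subset_Icc le_rfl hus).eventuallyLE
      -- joint a.e.-measurability on the product
      set ν : Measure ℝ := volume.restrict (Icc (0:ℝ) s) with hν
      have joint : AEMeasurable (fun p : Ω N × ℝ => fK K (Z N p.2 p.1)) ((μ N).prod ν) := by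
        obtain ⟨E, hEsub, hEmeas, hEnull⟩ := exists_measurable_superset_of_null (ae_iff.mp hrc)
        have h1 : ((μ N).prod ν) (E ×ˢ (univ : Set ℝ)) = 0 := by
          rw [Measure.prod_prod, hEnull, zero_mul]
        have h2 : ((μ N).prod ν) ((univ : Set (Ω N)) ×ˢ (Icc (0:ℝ) s)ᶜ) = 0 := by
          rw [Measure.prod_prod]
          have hcompl : ν (Icc (0:ℝ) s)ᶜ = 0 := by
            rw [hν, Measure.restrict_apply measurableSet_Icc.compl]
            simp
          rw [hcompl, mul_zero]
        have hae : ∀ᵐ p ∂((μ N).prod ν), p.1 ∉ E ∧ p.2 ∈ Icc (0:ℝ) s := by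
          rw [ae_iff]
          apply measure_mono_null ?_ (measure_union_null h1 h2)
          intro p hp
          simp only [mem_setOf_eq, not_and_or, not_not] at hp
          rcases hp with hp | hp
          · exact Or.inl (by exact ⟨hp, mem_univ _⟩)
          · exact Or.inr (by exact ⟨mem_univ _, hp⟩)
        apply aemeasurable_of_tendsto_metrizable_ae' (μ := (μ N).prod ν)
          (f := fun m (p : Ω N × ℝ) => fK K (Z N (stepT m p.2) p.1))
        · intro m
          exact (measurable_comp_stepT_prod (Z N) hZmeas (fK K)
            (fK_continuous K).measurable m).aemeasurable
        · filter_upwards [hae] with p hp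
          have hG : ∀ u : ℝ, 0 ≤ u →
              Tendsto (fun u' => Z N u' p.1) (nhdsWithin u (Ici u)) (nhds (Z N u p.1)) := by
            by_contra hcon
            push_neg at hcon
            exact hp.1 (hEsub (by simpa [mem_setOf_eq] using hcon))
          exact ((fK_continuous K).tendsto _).comp ((hG p.2 hp.2.1).comp (stepT_tendsto p.2))
      -- the dominating functional J
      set J : Ω N → ℝ := fun ω => ∫ r in Icc (0:ℝ) s, c * (1 + fK K (Z N r ω)) with hJ
      have hJnn : ∀ ω, 0 ≤ J ω := fun ω =>
        setIntegral_nonneg measurableSet_Icc fun r _ => by nlinarith [fK_nonneg K (Z N r ω)]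
      have hJmeas : AEStronglyMeasurable J (μ N) := by
        have h0 : AEStronglyMeasurable (fun p : Ω N × ℝ => c * (1 + fK K (Z N p.2 p.1)))
            ((μ N).prod ν) := by
          apply AEMeasurable.aestronglyMeasurable
          exact (measurable_const.mul (measurable_const.add measurable_id)).comp_aemeasurable joint
        exact h0.integral_prod_right'
      have hJint : Integrable J (μ N) := by
        apply Integrable.mono' (integrable_const (c * (1 + (K : ℝ) ^ 4) * s)) hJmeas
        filter_upwards [hpath] with ω hpω
        calc ‖J ω‖ ≤ ∫ r in Icc (0:ℝ) s, c * (1 + (K : ℝ) ^ 4) := by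
              apply norm_integral_le_of_norm_le (integrable_const _)
              filter_upwards with r
              have h1 := fK_nonneg K (Z N r ω); have h2 := fK_le K (Z N r ω)
              rw [Real.norm_eq_abs, abs_of_nonneg (by nlinarith)]
              nlinarith
          _ = c * (1 + (K : ℝ) ^ 4) * s := by
              rw [setIntegral_const, measureReal_def, Real.volume_Icc, smul_eq_mul,
                ENNReal.toReal_ofReal (by linarith [hs.1])]
              ring
      -- martingale identity
      have hsMart : ∀ n : ℕ,
          (∫ ω, (fK K (Z N (min s (τ n ω)) ω)
              - ∫ r in Icc (0:ℝ) (min s (τ n ω)), g (Z N r ω)) ∂(μ N))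
          = ∫ ω, fK K (Z N (min 0 (τ n ω)) ω) ∂(μ N) := by
        intro n
        have hint_s : Integrable (fun ω => fK K (Z N (min s (τ n ω)) ω) - fK K (Z N 0 ω)
            - ∫ r in Icc (0:ℝ) (min s (τ n ω)), g (Z N r ω)) (μ N) := (hτmart n).integrable s
        have hint_0 : Integrable (fun ω => fK K (Z N (min 0 (τ n ω)) ω) - fK K (Z N 0 ω)
            - ∫ r in Icc (0:ℝ) (min 0 (τ n ω)), g (Z N r ω)) (μ N) := (hτmart n).integrable 0
        have heq := (hτmart n).setIntegral_eq (i := 0) (j := s) hs.1 MeasurableSet.univ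
        rw [setIntegral_univ, setIntegral_univ] at heq
        have heq' : (∫ ω, (fK K (Z N (min 0 (τ n ω)) ω) - fK K (Z N 0 ω)
              - ∫ r in Icc (0:ℝ) (min 0 (τ n ω)), g (Z N r ω)) ∂(μ N))
            = ∫ ω, (fK K (Z N (min s (τ n ω)) ω) - fK K (Z N 0 ω)
              - ∫ r in Icc (0:ℝ) (min s (τ n ω)), g (Z N r ω)) ∂(μ N) := heq
        calc (∫ ω, (fK K (Z N (min s (τ n ω)) ω)
                - ∫ r in Icc (0:ℝ) (min s (τ n ω)), g (Z N r ω)) ∂(μ N))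
            = ∫ ω, ((fK K (Z N (min s (τ n ω)) ω) - fK K (Z N 0 ω)
                - ∫ r in Icc (0:ℝ) (min s (τ n ω)), g (Z N r ω)) + fK K (Z N 0 ω)) ∂(μ N) := by
              congr 1; funext ω; ring
          _ = (∫ ω, (fK K (Z N (min s (τ n ω)) ω) - fK K (Z N 0 ω)
                - ∫ r in Icc (0:ℝ) (min s (τ n ω)), g (Z N r ω)) ∂(μ N))
              + ∫ ω, fK K (Z N 0 ω) ∂(μ N) := integral_add hint_s hint_f0
          _ = (∫ ω, (fK K (Z N (min 0 (τ n ω)) ω) - fK K (Z N 0 ω)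
                - ∫ r in Icc (0:ℝ) (min 0 (τ n ω)), g (Z N r ω)) ∂(μ N))
              + ∫ ω, fK K (Z N 0 ω) ∂(μ N) := by rw [← heq']
          _ = ∫ ω, ((fK K (Z N (min 0 (τ n ω)) ω) - fK K (Z N 0 ω)
                - ∫ r in Icc (0:ℝ) (min 0 (τ n ω)), g (Z N r ω)) + fK K (Z N 0 ω)) ∂(μ N) :=
              (integral_add hint_0 hint_f0).symm
          _ = ∫ ω, fK K (Z N (min 0 (τ n ω)) ω) ∂(μ N) := by
              congr 1; funext ω
              rw [hI0 (min 0 (τ n ω)) (min_le_left _ _) ω]; ring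
      -- bound at time 0
      have hA : ∀ n : ℕ, (∫ ω, fK K (Z N (min 0 (τ n ω)) ω) ∂(μ N))
          ≤ x ^ 4 + 2 * (K : ℝ) ^ 4 * ((μ N) {ω | τ n ω < 0}).toReal := by
        intro n
        have hsetm : MeasurableSet {ω | τ n ω < 0} :=
          (F N).le 0 _ (by have h := (hτstop n).measurableSet_lt 0; simp only [WithTop.coe_lt_coe] at h; exact h)
        have hintL : Integrable (fun ω => fK K (Z N (min 0 (τ n ω)) ω)) (μ N) := by
          have h1 : Integrable (fun ω => (fK K (Z N (min 0 (τ n ω)) ω) - fK K (Z N 0 ω)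
              - ∫ r in Icc (0:ℝ) (min 0 (τ n ω)), g (Z N r ω)) + fK K (Z N 0 ω)) (μ N) :=
            ((hτmart n).integrable 0).add hint_f0
          apply h1.congr
          filter_upwards with ω
          rw [hI0 (min 0 (τ n ω)) (min_le_left _ _) ω]; ring
        have hintI : Integrable (fun ω => ({ω' | τ n ω' < 0}).indicator
            (fun _ => 2 * (K : ℝ) ^ 4) ω) (μ N) := (integrable_const _).indicator hsetm
        have hpw : ∀ ω, fK K (Z N (min 0 (τ n ω)) ω) ≤ fK K (Z N 0 ω)
            + ({ω' | τ n ω' < 0}).indicator (fun _ => 2 * (K : ℝ) ^ 4) ω := by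
          intro ω
          by_cases h0 : τ n ω < 0
          · rw [indicator_of_mem (by simpa [mem_setOf_eq] using h0)]
            have h1 := fK_le K (Z N (min 0 (τ n ω)) ω)
            have h2 := fK_nonneg K (Z N 0 ω)
            have h3 : (0:ℝ) ≤ (K : ℝ) ^ 4 := by positivity
            linarith
          · have hmin : min 0 (τ n ω) = 0 := min_eq_left (not_lt.1 h0)
            rw [hmin, indicator_of_notMem (by simpa [mem_setOf_eq] using h0)]
            simp
        have hintR : Integrable (fun ω => fK K (Z N 0 ω)
            + ({ω' | τ n ω' < 0}).indicator (fun _ => 2 * (K : ℝ) ^ 4) ω) (μ N) := by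
          have h := hint_f0.add hintI; exact h
        have hmono := integral_mono_ae hintL hintR (ae_of_all _ hpw)
        rw [integral_add hint_f0 hintI, integral_indicator_const _ hsetm] at hmono
        have hf0 : (∫ ω, fK K (Z N 0 ω) ∂(μ N)) ≤ x ^ 4 := by
          have hconst : (∫ ω, fK K (Z N 0 ω) ∂(μ N))
              = fK K ((Nat.floor ((N : ℝ) * x) : ℝ) / N) := by
            rw [integral_congr_ae
              (g := fun _ => fK K ((Nat.floor ((N : ℝ) * x) : ℝ) / N)) ?_, integral_const]
            · simp
            · filter_upwards [hinit] with ω hω; rw [hω]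
          rw [hconst]
          have hle : ((Nat.floor ((N : ℝ) * x) : ℝ) / N) ≤ x := by
            rw [div_le_iff₀ hN0, mul_comm]
            exact Nat.floor_le (by positivity)
          calc fK K ((Nat.floor ((N : ℝ) * x) : ℝ) / N)
              ≤ ((Nat.floor ((N : ℝ) * x) : ℝ) / N) ^ 4 := fK_le_pow K (by positivity)
            _ ≤ x ^ 4 := pow_le_pow_left₀ (by positivity) hle 4
        rw [smul_eq_mul, measureReal_def] at hmono
        nlinarith [hmono, hf0]
      -- the exceptional sets vanish
      have hμ0 : Tendsto (fun n => ((μ N) {ω | τ n ω < 0}).toReal) atTop (nhds 0) := by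
        have hm : ∀ n, MeasurableSet {ω | τ n ω < 0} := fun n =>
          (F N).le 0 _ (by have h := (hτstop n).measurableSet_lt 0; simp only [WithTop.coe_lt_coe] at h; exact h)
        have h1 : Tendsto (fun n => (μ N) {ω | τ n ω < 0}) atTop (nhds 0) := by
          have hDCT := tendsto_lintegral_of_dominated_convergence (μ := μ N)
            (F := fun n ω => ({ω' | τ n ω' < 0}).indicator (fun _ => (1 : ℝ≥0∞)) ω)
            (f := fun _ => 0) (bound := fun _ => 1)
            (fun n => measurable_const.indicator (hm n))
            (fun n => ae_of_all _ fun ω => by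
              show ({ω' | τ n ω' < 0}).indicator (fun _ => (1 : ℝ≥0∞)) ω ≤ 1
              by_cases hω : ω ∈ {ω' | τ n ω' < 0}
              · rw [indicator_of_mem hω]
              · rw [indicator_of_notMem hω]; exact zero_le_one)
            (by simp)
            ?_
          · have hrw : ∀ n, (∫⁻ ω, ({ω' | τ n ω' < 0}).indicator (fun _ => (1 : ℝ≥0∞)) ω ∂(μ N))
                = (μ N) {ω' | τ n ω' < 0} := fun n => by
              rw [lintegral_indicator (hm n)]
              simp
            simpa [hrw] using hDCT
          · filter_upwards [hτtend] with ω hω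
            have hev : ∀ᶠ n in atTop,
                ({ω' | τ n ω' < 0}).indicator (fun _ => (1 : ℝ≥0∞)) ω = 0 := by
              filter_upwards [hω.eventually_ge_atTop 0] with n hn
              exact indicator_of_notMem (by simpa [mem_setOf_eq] using not_lt.2 hn) _
            exact Tendsto.congr' (hev.mono fun n hn => hn.symm) tendsto_const_nhds
        have := (ENNReal.tendsto_toReal (by simp : (0:ℝ≥0∞) ≠ ⊤)).comp h1
        exact this
      -- pass to the limit n → ∞
      have hWint : ∀ n, Integrable (fun ω => (fK K (Z N (min s (τ n ω)) ω)
          - ∫ r in Icc (0:ℝ) (min s (τ n ω)), g (Z N r ω)) + J ω) (μ N) := by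
        intro n
        have h1 : Integrable (fun ω => fK K (Z N (min s (τ n ω)) ω) - fK K (Z N 0 ω)
            - ∫ r in Icc (0:ℝ) (min s (τ n ω)), g (Z N r ω)) (μ N) := (hτmart n).integrable s
        have h2 := (h1.add hint_f0).add hJint
        apply h2.congr
        filter_upwards with ω
        simp only [Pi.add_apply]
        ring
      have hWnn : ∀ n, ∀ᵐ ω ∂(μ N), 0 ≤ (fK K (Z N (min s (τ n ω)) ω)
          - ∫ r in Icc (0:ℝ) (min s (τ n ω)), g (Z N r ω)) + J ω := by
        intro n
        filter_upwards [hpath] with ω hpω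
        by_cases h0 : τ n ω < 0
        · have hI : (∫ r in Icc (0:ℝ) (min s (τ n ω)), g (Z N r ω)) = 0 :=
            hI0 _ (min_le_of_right_le h0.le) ω
          rw [hI]
          have := fK_nonneg K (Z N (min s (τ n ω)) ω)
          have := hJnn ω
          linarith
        · have h0' : 0 ≤ min s (τ n ω) := le_min hs.1 (not_lt.1 h0)
          have hIJ := hpω.2.2 (min s (τ n ω)) h0' (min_le_left _ _)
          have := fK_nonneg K (Z N (min s (τ n ω)) ω)
          linarith
      have hWval : ∀ n, (∫⁻ ω, ENNReal.ofReal ((fK K (Z N (min s (τ n ω)) ω)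
            - ∫ r in Icc (0:ℝ) (min s (τ n ω)), g (Z N r ω)) + J ω) ∂(μ N))
          ≤ ENNReal.ofReal (x ^ 4 + 2 * (K : ℝ) ^ 4 * ((μ N) {ω | τ n ω < 0}).toReal
            + ∫ ω, J ω ∂(μ N)) := by
        intro n
        rw [← ofReal_integral_eq_lintegral_ofReal (hWint n) (hWnn n)]
        apply ENNReal.ofReal_le_ofReal
        have hfirst : Integrable (fun ω => fK K (Z N (min s (τ n ω)) ω)
            - ∫ r in Icc (0:ℝ) (min s (τ n ω)), g (Z N r ω)) (μ N) := by
          have h1 : Integrable (fun ω => fK K (Z N (min s (τ n ω)) ω) - fK K (Z N 0 ω)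
              - ∫ r in Icc (0:ℝ) (min s (τ n ω)), g (Z N r ω)) (μ N) := (hτmart n).integrable s
          apply (h1.add hint_f0).congr
          filter_upwards with ω
          simp only [Pi.add_apply]
          ring
        rw [integral_add hfirst hJint, hsMart n]
        linarith [hA n]
      have hlim : ∀ᵐ ω ∂(μ N), ENNReal.ofReal (fK K (Z N s ω))
          ≤ liminf (fun n => ENNReal.ofReal ((fK K (Z N (min s (τ n ω)) ω)
              - ∫ r in Icc (0:ℝ) (min s (τ n ω)), g (Z N r ω)) + J ω)) atTop := by
        filter_upwards [hτtend, hpath] with ω hω hpω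
        apply le_liminf_of_le
        · isBoundedDefault
        · filter_upwards [hω.eventually_ge_atTop s] with n hn
          have hmin : min s (τ n ω) = s := min_eq_left hn
          apply ENNReal.ofReal_le_ofReal
          rw [hmin]
          have hJω := hpω.2.2 s hs.1 le_rfl
          linarith
      have hWmeas : ∀ n, AEMeasurable (fun ω => ENNReal.ofReal ((fK K (Z N (min s (τ n ω)) ω)
          - ∫ r in Icc (0:ℝ) (min s (τ n ω)), g (Z N r ω)) + J ω)) (μ N) := fun n =>
        ENNReal.measurable_ofReal.comp_aemeasurable (hWint n).aemeasurable
      have hvs : v K s ≤ ENNReal.ofReal (x ^ 4 + ∫ ω, J ω ∂(μ N)) := by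
        calc v K s ≤ ∫⁻ ω, liminf (fun n => ENNReal.ofReal ((fK K (Z N (min s (τ n ω)) ω)
              - ∫ r in Icc (0:ℝ) (min s (τ n ω)), g (Z N r ω)) + J ω)) atTop ∂(μ N) :=
            lintegral_mono_ae hlim
          _ ≤ liminf (fun n => ∫⁻ ω, ENNReal.ofReal ((fK K (Z N (min s (τ n ω)) ω)
              - ∫ r in Icc (0:ℝ) (min s (τ n ω)), g (Z N r ω)) + J ω) ∂(μ N)) atTop :=
            lintegral_liminf_le' hWmeas
          _ ≤ liminf (fun n => ENNReal.ofReal (x ^ 4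
              + 2 * (K : ℝ) ^ 4 * ((μ N) {ω | τ n ω < 0}).toReal
              + ∫ ω, J ω ∂(μ N))) atTop := liminf_le_liminf (Eventually.of_forall hWval)
          _ = ENNReal.ofReal (x ^ 4 + ∫ ω, J ω ∂(μ N)) := by
            apply Tendsto.liminf_eq
            apply ENNReal.tendsto_ofReal
            have h2 : Tendsto (fun n => x ^ 4
                + 2 * (K : ℝ) ^ 4 * ((μ N) {ω | τ n ω < 0}).toReal
                + ∫ ω, J ω ∂(μ N)) atTop
                (nhds (x ^ 4 + 2 * (K : ℝ) ^ 4 * 0 + ∫ ω, J ω ∂(μ N))) :=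
              (((hμ0.const_mul (2 * (K : ℝ) ^ 4)).const_add (x ^ 4)).add_const _)
            simpa using h2
      -- Fubini
      have hJswap : ENNReal.ofReal (∫ ω, J ω ∂(μ N))
          = ∫⁻ r in Icc (0:ℝ) s, (ENNReal.ofReal c * (1 + v K r)) := by
        rw [ofReal_integral_eq_lintegral_ofReal hJint (ae_of_all _ hJnn)]
        have hcong : (∫⁻ ω, ENNReal.ofReal (J ω) ∂(μ N))
            = ∫⁻ ω, (∫⁻ r, ENNReal.ofReal (c * (1 + fK K (Z N r ω))) ∂ν) ∂(μ N) := by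
          apply lintegral_congr_ae
          filter_upwards [hpath] with ω hpω
          rw [hJ]
          rw [ofReal_integral_eq_lintegral_ofReal (hpω.2.1 s)
            (ae_of_all _ fun r => by
              show (0:ℝ) ≤ c * (1 + fK K (Z N r ω))
              nlinarith [fK_nonneg K (Z N r ω)])]
        rw [hcong]
        have huncurry : AEMeasurable (Function.uncurry fun (ω : Ω N) (r : ℝ) =>
            ENNReal.ofReal (c * (1 + fK K (Z N r ω)))) ((μ N).prod ν) := by
          have hφ : Measurable fun y : ℝ => ENNReal.ofReal (c * (1 + y)) := by fun_prop
          exact hφ.comp_aemeasurable joint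
        rw [lintegral_lintegral_swap huncurry]
        apply lintegral_congr
        intro r
        have hpoint : ∀ ω', ENNReal.ofReal (c * (1 + fK K (Z N r ω')))
            = ENNReal.ofReal c * (1 + ENNReal.ofReal (fK K (Z N r ω'))) := by
          intro ω'
          rw [ENNReal.ofReal_mul hc0.le, ENNReal.ofReal_add zero_le_one (fK_nonneg K _)]
          norm_num
        calc (∫⁻ ω', ENNReal.ofReal (c * (1 + fK K (Z N r ω'))) ∂(μ N))
            = ∫⁻ ω', ENNReal.ofReal c * (1 + ENNReal.ofReal (fK K (Z N r ω'))) ∂(μ N) :=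
            lintegral_congr hpoint
          _ = ENNReal.ofReal c * ∫⁻ ω', (1 + ENNReal.ofReal (fK K (Z N r ω'))) ∂(μ N) :=
            lintegral_const_mul' _ _ ENNReal.ofReal_ne_top
          _ = ENNReal.ofReal c * (1 + v K r) := by
            rw [lintegral_add_left measurable_const, lintegral_const]
            simp [hvdef]
      calc v K s ≤ ENNReal.ofReal (x ^ 4 + ∫ ω, J ω ∂(μ N)) := hvs
        _ = ENNReal.ofReal (x ^ 4) + ENNReal.ofReal (∫ ω, J ω ∂(μ N)) :=
          ENNReal.ofReal_add (by positivity) (integral_nonneg hJnn)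
        _ = ENNReal.ofReal (x ^ 4) + ∫⁻ r in Icc (0:ℝ) s, (ENNReal.ofReal c * (1 + v K r)) := by
          rw [hJswap]
  -- conclude by Fatou in K
  have hfatou : (∫⁻ ω, ENNReal.ofReal ((Z N t ω) ^ 4) ∂(μ N)) ≤
      liminf (fun K : ℕ => v K t) atTop := by
    have hae : ∀ᵐ ω ∂(μ N), ENNReal.ofReal ((Z N t ω) ^ 4)
        ≤ liminf (fun K : ℕ => ENNReal.ofReal (fK K (Z N t ω))) atTop := by
      filter_upwards [hlat] with ω hω
      obtain ⟨k, hk⟩ := hω t ht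
      apply le_liminf_of_le
      · isBoundedDefault
      · have hz0 : 0 ≤ Z N t ω := by rw [hk]; positivity
        have hzk : Z N t ω ≤ (k : ℝ) := by
          rw [hk]; rw [div_le_iff₀ hN0]
          have h1N : (1:ℝ) ≤ N := by exact_mod_cast hN
          nlinarith [Nat.cast_nonneg (α := ℝ) k]
        filter_upwards [eventually_ge_atTop k] with K hK
        have : fK K (Z N t ω) = (Z N t ω) ^ 4 :=
          fK_of_lt K hz0 (hzk.trans (by exact_mod_cast hK))
        rw [this]
    calc (∫⁻ ω, ENNReal.ofReal ((Z N t ω) ^ 4) ∂(μ N))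
        ≤ ∫⁻ ω, liminf (fun K : ℕ => ENNReal.ofReal (fK K (Z N t ω))) atTop ∂(μ N) :=
          lintegral_mono_ae hae
      _ ≤ liminf (fun K : ℕ => v K t) atTop :=
          lintegral_liminf_le' fun K => (hvmeasω K t).aemeasurable
  refine hfatou.trans ?_
  have : ∀ K : ℕ, v K t ≤ ENNReal.ofReal (2 * (x ^ 4 + c * T) * Real.exp (2 * c * T)) :=
    fun K => key K t ⟨ht, htT⟩
  calc liminf (fun K : ℕ => v K t) atTop
      ≤ liminf (fun _ : ℕ => ENNReal.ofReal (2 * (x ^ 4 + c * T) * Real.exp (2 * c * T))) atTop :=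
        liminf_le_liminf (Eventually.of_forall this)
    _ = ENNReal.ofReal (2 * (x ^ 4 + c * T) * Real.exp (2 * c * T)) := liminf_const _
end
end
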